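/- arXiv:1501.04357 — 9 statements merged into one kernel-verified Lean document; each statement's English description precedes it below -/
import Mathlib

section
/- For every natural number m there exists a natural number O = O(m) with the following property: for every subgroup N of the special unitary group SU(m) (the group of m×m complex unitary matrices of determinant 1) such that N is nilpotent of nilpotency class s with s ≥ 2, the s-th term N_(s) of the lower central series of N is a commutative (abelian) subgroup, is finite, and has cardinality at most O. -/
/-- The special unitary group `SU(m)` is a group (inverse given by conjugate transpose). -/
noncomputable instance (m : ℕ) : Group (Matrix.specialUnitaryGroup (Fin m) ℂ) where
  inv A := ⟨star A.1, by
    obtain ⟨h1, h2⟩ := Matrix.mem_specialUnitaryGroup_iff.mp A.2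
    refine Matrix.mem_specialUnitaryGroup_iff.mpr ⟨Unitary.star_mem h1, ?_⟩
    rw [Matrix.star_eq_conjTranspose, Matrix.det_conjTranspose, h2, star_one]⟩
  inv_mul_cancel A := by
    obtain ⟨h1, _⟩ := Matrix.mem_specialUnitaryGroup_iff.mp A.2
    exact Subtype.ext ((Unitary.mem_iff.mp h1).1)

/-!
Let `H = N_(s)`. Since `[H, N] = N_(s+1) = 1`, `H` is central in `N`, hence abelian. It is generated
by commutators `z = [y, x]` with `y ∈ N_(s-1)`, and such a `z` commutes with `x` and `y`. Hence
`x` and `y` act on every eigenspace `E` of `z`, and taking determinants in `yx = z xy` on `E` gives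
`μ ^ dim E = 1` for the eigenvalue `μ`. So all eigenvalues of `z` are roots of unity of order at
most `m`, and as `z` is unitary, `z ^ m! = 1`. Then `H` is a commuting family of matrices of
exponent dividing `m!`; diagonalising it simultaneously embeds `H` into `(μ_{m!})^m`, so
`|H| ≤ (m!)^m`.
-/

open Module End
open scoped commutatorElement

namespace Module.End

variable {K V : Type*} [Field K] [AddCommGroup V] [Module K V]

lemma det_restrict_ne_zero [FiniteDimensional K V] {f : End K V} (hf : IsUnit f)
    {p : Submodule K V} (hp : ∀ x ∈ p, f x ∈ p) : LinearMap.det (f.restrict hp) ≠ 0 := by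
  refine (LinearMap.isUnit_det _ ?_).ne_zero
  rw [LinearMap.isUnit_iff_ker_eq_bot, LinearMap.ker_eq_bot, LinearMap.injective_restrict_iff]
  exact disjoint_bot_right.mono_right ((LinearMap.isUnit_iff_ker_eq_bot f).mp hf).le

lemma pow_finrank_eigenspace_eq_one [FiniteDimensional K V] {f g z : End K V} (hf : IsUnit f)
    (hg : IsUnit g) (hzf : Commute z f) (hzg : Commute z g) (hgf : g * f = z * (f * g)) (μ : K) :
    μ ^ finrank K (z.eigenspace μ) = 1 := by
  set E := z.eigenspace μ
  have hfE : ∀ v ∈ E, f v ∈ E := mapsTo_genEigenspace_of_comm hzf μ 1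
  have hgE : ∀ v ∈ E, g v ∈ E := mapsTo_genEigenspace_of_comm hzg μ 1
  have hzE : z.restrict (mapsTo_genEigenspace_of_comm (Commute.refl z) μ 1) = μ • 1 := by
    ext ⟨v, hv⟩
    exact mem_eigenspace_iff.mp hv
  have hgfE : g.restrict hgE * f.restrict hfE = (μ • 1) * (f.restrict hfE * g.restrict hgE) := by
    rw [← hzE]
    ext v
    exact congr($hgf v)
  have hdet := congr(LinearMap.det $hgfE)
  rw [map_mul, map_mul, map_mul, LinearMap.det_smul, map_one, mul_one, mul_comm] at hdet
  exact (mul_eq_right₀ (mul_ne_zero (det_restrict_ne_zero hf _) (det_restrict_ne_zero hg _))).mp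
    hdet.symm

lemma HasEigenvalue.pow_factorial_eq_one_of_commutator [FiniteDimensional K V]
    {f g z : End K V} (hf : IsUnit f) (hg : IsUnit g) (hzf : Commute z f) (hzg : Commute z g)
    (hgf : g * f = z * (f * g)) {μ : K} (hμ : z.HasEigenvalue μ) :
    μ ^ (finrank K V).factorial = 1 := by
  have hpos : 0 < finrank K (z.eigenspace μ) :=
    Nat.pos_of_ne_zero (Submodule.finrank_eq_zero.not.mpr (hasEigenvalue_iff.mp hμ))
  obtain ⟨c, hc⟩ := Nat.dvd_factorial hpos (Submodule.finrank_le (z.eigenspace μ))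
  rw [hc, pow_mul, pow_finrank_eigenspace_eq_one hf hg hzf hzg hgf, one_pow]

lemma maxGenEigenspace_eq_eigenspace_of_pow_eq_one {f : End K V} {L : ℕ} (hL : (L : K) ≠ 0)
    (hf : f ^ L = 1) (μ : K) : f.maxGenEigenspace μ = f.eigenspace μ :=
  (isSemisimple_of_squarefree_aeval_eq_zero
    (Polynomial.separable_X_pow_sub_C 1 hL one_ne_zero).squarefree
    (by simp [hf])).isFinitelySemisimple.maxGenEigenspace_eq_eigenspace μ

lemma HasEigenvector.pow_eq_one {f : End K V} {μ : K} {v : V} (hv : f.HasEigenvector μ v)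
    {L : ℕ} (hf : f ^ L = 1) : μ ^ L = 1 :=
  smul_left_injective K hv.2 (by simp [← hv.pow_apply, hf])

variable {ι : Type*} {f : ι → End K V} {L : ℕ}

lemma iSupIndep_iInf_eigenspace_of_pow_eq_one (hcomm : ∀ i j, Commute (f i) (f j))
    (hL : (L : K) ≠ 0) (hf : ∀ i, f i ^ L = 1) :
    iSupIndep fun χ : ι → K ↦ ⨅ i, (f i).eigenspace (χ i) := by
  have hmax i := maxGenEigenspace_eq_eigenspace_of_pow_eq_one hL (hf i)
  simp only [← hmax]
  exact independent_iInf_maxGenEigenspace_of_forall_mapsTo f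
    fun i j μ ↦ mapsTo_maxGenEigenspace_of_comm (hcomm j i) μ

lemma iSup_iInf_eigenspace_eq_top_of_pow_eq_one [FiniteDimensional K V] [IsAlgClosed K]
    (hcomm : ∀ i j, Commute (f i) (f j)) (hL : (L : K) ≠ 0) (hf : ∀ i, f i ^ L = 1) :
    ⨆ χ : ι → K, ⨅ i, (f i).eigenspace (χ i) = ⊤ := by
  have hmax i := maxGenEigenspace_eq_eigenspace_of_pow_eq_one hL (hf i)
  simp only [← hmax]
  exact iSup_iInf_maxGenEigenspace_eq_top_of_iSup_maxGenEigenspace_eq_top_of_commute f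
    (fun i j _ ↦ hcomm i j) fun i ↦ iSup_maxGenEigenspace_eq_top (f i)

theorem finite_and_card_le_of_pow_eq_one [FiniteDimensional K V] [IsAlgClosed K]
    (hinj : Function.Injective f) (hcomm : ∀ i j, Commute (f i) (f j)) (hL : (L : K) ≠ 0)
    (hf : ∀ i, f i ^ L = 1) : Finite ι ∧ Nat.card ι ≤ L ^ finrank K V := by
  classical
  have hLpos : 0 < L := Nat.pos_of_ne_zero (by rintro rfl; simp at hL)
  set W := fun χ : ι → K ↦ ⨅ i, (f i).eigenspace (χ i)
  have hind : iSupIndep W := iSupIndep_iInf_eigenspace_of_pow_eq_one hcomm hL hf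
  have htop : ⨆ χ, W χ = ⊤ := iSup_iInf_eigenspace_eq_top_of_pow_eq_one hcomm hL hf
  let _ : Fintype {χ // W χ ≠ ⊥} := hind.fintypeNeBotOfFiniteDimensional
  have hroot (χ : {χ // W χ ≠ ⊥}) (i : ι) :
      χ.1 i ∈ Polynomial.nthRootsFinset L (1 : K) := by
    obtain ⟨v, hv, hv0⟩ := Submodule.exists_mem_ne_zero_of_ne_bot χ.2
    rw [Polynomial.mem_nthRootsFinset hLpos]
    exact HasEigenvector.pow_eq_one ⟨(Submodule.mem_iInf _).mp hv i, hv0⟩ (hf i)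
  let Φ : ι → {χ // W χ ≠ ⊥} → Polynomial.nthRootsFinset L (1 : K) :=
    fun i χ ↦ ⟨χ.1 i, hroot χ i⟩
  have hΦ : Function.Injective Φ := by
    intro a b hab
    refine hinj (LinearMap.ext fun v ↦ ?_)
    suffices ⊤ ≤ LinearMap.eqLocus (f a) (f b) from this Submodule.mem_top
    refine htop ▸ iSup_le fun χ ↦ ?_
    by_cases hχ : W χ = ⊥
    · simp [hχ]
    intro v hv
    have hab : χ a = χ b := congr_arg Subtype.val (congr_fun hab ⟨χ, hχ⟩)
    have hv (i : ι) : f i v = χ i • v := mem_eigenspace_iff.mp ((Submodule.mem_iInf _).mp hv i)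
    rw [LinearMap.mem_eqLocus, hv a, hv b, hab]
  refine ⟨_root_.Finite.of_injective Φ hΦ, ?_⟩
  calc Nat.card ι ≤ Nat.card ({χ // W χ ≠ ⊥} → Polynomial.nthRootsFinset L (1 : K)) :=
        Nat.card_le_card_of_injective Φ hΦ
    _ = (Polynomial.nthRootsFinset L (1 : K)).card ^ Fintype.card {χ // W χ ≠ ⊥} := by simp
    _ ≤ L ^ finrank K V := by
        gcongr
        · exact (Multiset.toFinset_card_le _).trans (Polynomial.card_nthRoots L (1 : K))
        · exact hind.subtype_ne_bot_le_finrank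

end Module.End

lemma IsStarNormal.pow_eq_one_of_spectrum {A : Type*} [TopologicalSpace A] [Ring A] [StarRing A]
    [Algebra ℂ A] [ContinuousFunctionalCalculus ℂ A IsStarNormal] {a : A} [IsStarNormal a]
    {L : ℕ} (h : ∀ μ ∈ spectrum ℂ a, μ ^ L = 1) : a ^ L = 1 := calc
  a ^ L = cfc (· ^ L : ℂ → ℂ) a := (cfc_pow_id a L).symm
  _ = cfc (fun _ ↦ 1 : ℂ → ℂ) a := cfc_congr h
  _ = 1 := cfc_const_one ℂ a

namespace Matrix.UnitaryGroup

variable {n α : Type*} [Fintype n] [DecidableEq n] [CommRing α] [StarRing α]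

def toEnd : unitaryGroup n α →* End α (n → α) := (Units.coeHom _).comp embeddingGL

@[simp]
lemma toEnd_apply (A : unitaryGroup n α) : toEnd A = Matrix.toLin' (A : Matrix n n α) := rfl

lemma toEnd_injective : Function.Injective (toEnd : unitaryGroup n α →* End α (n → α)) :=
  fun _ _ h ↦ Subtype.ext (Matrix.toLin'.injective h)

-- The L2 operator norm provides the continuous functional calculus on `Matrix n n ℂ`.
open scoped Matrix.Norms.L2Operator in
theorem commutator_pow_factorial_eq_one {x y : unitaryGroup n ℂ} (hx : Commute ⁅x, y⁆ x)
    (hy : Commute ⁅x, y⁆ y) : ⁅x, y⁆ ^ (Fintype.card n).factorial = 1 := by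
  have hxy : x * y = ⁅x, y⁆ * (y * x) := by group
  have hspec : ∀ μ ∈ spectrum ℂ ((⁅x, y⁆ : unitaryGroup n ℂ) : Matrix n n ℂ),
      μ ^ (Fintype.card n).factorial = 1 := by
    intro μ hμ
    rw [← Matrix.spectrum_toLin', ← hasEigenvalue_iff_mem_spectrum] at hμ
    simpa [Module.finrank_fintype_fun_eq_card] using
      hμ.pow_factorial_eq_one_of_commutator ((Group.isUnit y).map toEnd)
        ((Group.isUnit x).map toEnd) (hy.map toEnd) (hx.map toEnd)
        (by simp only [← map_mul, hxy])
  exact Subtype.ext (by simpa using IsStarNormal.pow_eq_one_of_spectrum hspec)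

end Matrix.UnitaryGroup

namespace Subgroup

variable {Γ : Type*} [Group Γ] {S : Subgroup Γ} {k : ℕ}

lemma commute_of_mem_lowerCentralSeries (h : S.lowerCentralSeries (k + 1) = ⊥) {x y : Γ}
    (hx : x ∈ S.lowerCentralSeries k) (hy : y ∈ S) : Commute x y :=
  (mem_centralizer_iff.mp (commutator_eq_bot_iff_le_centralizer.mp h hx) y hy).symm

theorem map_pow_factorial_eq_one_of_mem_lowerCentralSeries {n : Type*} [Fintype n]
    [DecidableEq n] (ρ : Γ →* Matrix.unitaryGroup n ℂ)
    (h : S.lowerCentralSeries (k + 2) = ⊥)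
    {x : Γ} (hx : x ∈ S.lowerCentralSeries (k + 1)) : ρ x ^ (Fintype.card n).factorial = 1 := by
  rw [mem_lowerCentralSeries_succ_iff] at hx
  induction hx using closure_induction with
  | mem _ hz =>
    obtain ⟨y, hy, g, hg, rfl⟩ := hz
    have hc {w : Γ} (hw : w ∈ S) : Commute (ρ ⁅y, g⁆) (ρ w) :=
      (commute_of_mem_lowerCentralSeries h (subset_closure ⟨y, hy, g, hg, rfl⟩) hw).map ρ
    rw [map_commutatorElement] at hc ⊢
    exact Matrix.UnitaryGroup.commutator_pow_factorial_eq_one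
      (hc (lowerCentralSeries_le_self S k hy)) (hc hg)
  | one => simp
  | mul a b ha hb iha ihb =>
    rw [map_mul, ((commute_of_mem_lowerCentralSeries h ha
      (lowerCentralSeries_le_self S (k + 1) hb)).map ρ).mul_pow, iha, ihb, one_mul]
  | inv a _ ih => rw [map_inv, inv_pow, ih, inv_one]

end Subgroup

/-- For every `m` there is `O = O(m)` such that for every subgroup `N` of `SU(m)` which is
nilpotent of nilpotency class `s ≥ 2`, the `s`-th term `N_(s)` of the lower central series of
`N` (in Mathlib's indexing, `lowerCentralSeries N (s-1)`) is abelian, finite, and of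
cardinality at most `O`. -/
theorem lcs_top_term_abelian_bounded (m : ℕ) :
    ∃ O : ℕ, ∀ (N : Subgroup (Matrix.specialUnitaryGroup (Fin m) ℂ)) (s : ℕ),
      2 ≤ s →
      Subgroup.lowerCentralSeries (⊤ : Subgroup ↥N) (s - 1) ≠ ⊥ →
      Subgroup.lowerCentralSeries (⊤ : Subgroup ↥N) s = ⊥ →
      (∀ x y : ↥(Subgroup.lowerCentralSeries (⊤ : Subgroup ↥N) (s - 1)), x * y = y * x) ∧
        Finite ↥(Subgroup.lowerCentralSeries (⊤ : Subgroup ↥N) (s - 1)) ∧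
        Nat.card ↥(Subgroup.lowerCentralSeries (⊤ : Subgroup ↥N) (s - 1)) ≤ O := by
  refine ⟨m.factorial ^ m, fun N s hs _ hbot ↦ ?_⟩
  obtain ⟨k, rfl⟩ : ∃ k, s = k + 2 := ⟨s - 2, by omega⟩
  set H := (⊤ : Subgroup N).lowerCentralSeries (k + 1)
  have hcomm (x y : H) : Commute x y := Subtype.ext <|
    Subgroup.commute_of_mem_lowerCentralSeries hbot x.2 (Subgroup.mem_top y.1)
  let ρ : N →* Matrix.unitaryGroup (Fin m) ℂ :=
    (Submonoid.inclusion Matrix.specialUnitaryGroup_le_unitaryGroup).comp N.subtype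
  have hpow (x : H) : ρ x ^ m.factorial = 1 := by
    simpa using Subgroup.map_pow_factorial_eq_one_of_mem_lowerCentralSeries ρ hbot x.2
  let φ : H →* End ℂ (Fin m → ℂ) := (Matrix.UnitaryGroup.toEnd.comp ρ).comp H.subtype
  have hφ : Function.Injective φ := Matrix.UnitaryGroup.toEnd_injective.comp <|
    (Submonoid.inclusion_injective Matrix.specialUnitaryGroup_le_unitaryGroup).comp <|
      N.subtype_injective.comp H.subtype_injective
  obtain ⟨hfin, hcard⟩ := finite_and_card_le_of_pow_eq_one hφ (fun x y ↦ (hcomm x y).map φ)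
    (Nat.cast_ne_zero.mpr m.factorial_ne_zero) fun x ↦ by
      change Matrix.UnitaryGroup.toEnd (ρ x) ^ _ = 1
      rw [← map_pow, hpow, map_one]
  rw [Module.finrank_fin_fun] at hcard
  exact ⟨fun x y ↦ hcomm x y, hfin, hcard⟩
end

section
/- Let m be a natural number and let N be a subgroup of the special unitary group SU(m) that is nilpotent of nilpotency class s with s ≥ 2. Then every element γ of the s-th term N_(s) of the lower central series of N satisfies γ^(m!) = 1 (each such γ is conjugate in SU(m) to a diagonal matrix whose entries are roots of unity of order at most m). -/
open scoped commutatorElement in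
theorem Subgroup.lowerCentralSeries_le_center_of_succ_eq_bot {G : Type*} [Group G] {n : ℕ}
    (h : (⊤ : Subgroup G).lowerCentralSeries (n + 1) = ⊥) :
    (⊤ : Subgroup G).lowerCentralSeries n ≤ center G := by
  intro γ hγ
  refine mem_center_iff.mpr fun g => ?_
  have hγg : ⁅γ, g⁆ ∈ (⊤ : Subgroup G).lowerCentralSeries (n + 1) :=
    commutator_mem_commutator hγ (mem_top g)
  rw [h, mem_bot, commutatorElement_eq_one_iff_mul_comm] at hγg
  exact hγg.symm

namespace Representation

variable {K G V : Type*} [Field K] [Group G] [AddCommGroup V] [Module K V]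
  (ρ : Representation K G V) {γ : G}

def eigenspaceSubrepresentation (hγ : γ ∈ Subgroup.center G) (μ : K) :
    Subrepresentation ρ where
  toSubmodule := Module.End.eigenspace (ρ γ) μ
  apply_mem_toSubmodule g :=
    Module.End.mapsTo_genEigenspace_of_comm
      (Commute.map (Subgroup.mem_center_iff.mp hγ g).symm ρ) μ 1

theorem pow_finrank_eigenspace_eq_one [FiniteDimensional K V] (hcen : γ ∈ Subgroup.center G)
    (hcomm : γ ∈ commutator G) (μ : K) :
    μ ^ Module.finrank K (Module.End.eigenspace (ρ γ) μ) = 1 := by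
  let σ := (ρ.eigenspaceSubrepresentation hcen μ).toRepresentation
  let χ : G →* K := LinearMap.det.comp σ
  have hσγ : σ γ = μ • 1 := by
    ext x
    exact Module.End.mem_eigenspace_iff.mp x.2
  have hχγ : χ γ = μ ^ Module.finrank K (Module.End.eigenspace (ρ γ) μ) := by
    simp only [χ, MonoidHom.comp_apply, hσγ, LinearMap.det_smul, map_one, mul_one]
    rfl
  rw [← hχγ]
  -- a character into an abelian group is trivial on commutators
  simpa using congrArg Units.val
    (MonoidHom.mem_ker.mp (Abelianization.commutator_subset_ker χ.toHomUnits hcomm))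

theorem pow_factorial_finrank_eq_one_of_hasEigenvalue [FiniteDimensional K V]
    (hcen : γ ∈ Subgroup.center G) (hcomm : γ ∈ commutator G) {μ : K}
    (hμ : Module.End.HasEigenvalue (ρ γ) μ) : μ ^ (Module.finrank K V).factorial = 1 := by
  set E := Module.End.eigenspace (ρ γ) μ
  have : Nontrivial E := Submodule.nontrivial_iff_ne_bot.mpr hμ
  obtain ⟨c, hc⟩ :=
    Nat.dvd_factorial (Module.finrank_pos (R := K) (M := E)) (Submodule.finrank_le E)
  rw [hc, pow_mul, ρ.pow_finrank_eigenspace_eq_one hcen hcomm, one_pow]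

end Representation

theorem pow_eq_one_of_forall_mem_spectrum {R A : Type*} {p : A → Prop} [CommSemiring R]
    [StarRing R] [MetricSpace R] [IsTopologicalSemiring R] [ContinuousStar R]
    [TopologicalSpace A] [Ring A] [StarRing A] [Algebra R A]
    [ContinuousFunctionalCalculus R A p] {a : A} {k : ℕ}
    (h : ∀ μ ∈ spectrum R a, μ ^ k = 1) (ha : p a := by cfc_tac) : a ^ k = 1 := by
  rw [← cfc_pow_id (R := R) a k, ← cfc_const_one R a]
  exact cfc_congr h

open scoped Matrix.Norms.L2Operator in
theorem lcs_top_term_elements_torsion_general (m : ℕ)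
    (N : Subgroup (Matrix.specialUnitaryGroup (Fin m) ℂ)) (s : ℕ)
    (hs : 2 ≤ s)
    (h2 : Subgroup.lowerCentralSeries (⊤ : Subgroup ↥N) s = ⊥) :
    ∀ γ : ↥N, γ ∈ Subgroup.lowerCentralSeries (⊤ : Subgroup ↥N) (s - 1) → γ ^ (Nat.factorial m) = 1 := by
  intro γ hγ
  let ι : ↥N →* Matrix (Fin m) (Fin m) ℂ :=
    (Matrix.specialUnitaryGroup (Fin m) ℂ).subtype.comp N.subtype
  have hι : Function.Injective ι := Subtype.val_injective.comp Subtype.val_injective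
  let ρ : Representation ℂ ↥N (Fin m → ℂ) := Matrix.toLinAlgEquiv'.toMonoidHom.comp ι
  have hcen : γ ∈ Subgroup.center ↥N :=
    Subgroup.lowerCentralSeries_le_center_of_succ_eq_bot
      (by rwa [Nat.sub_add_cancel (by omega)]) hγ
  have hcomm : γ ∈ commutator ↥N :=
    Subgroup.lowerCentralSeries_antitone _ (by omega : 1 ≤ s - 1) hγ
  have := isStarNormal_of_mem_unitary (Matrix.mem_specialUnitaryGroup_iff.mp γ.1.2).1
  refine hι ?_
  rw [map_pow, map_one]
  refine pow_eq_one_of_forall_mem_spectrum (R := ℂ) fun μ hμ => ?_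
  have hμ' : Module.End.HasEigenvalue (ρ γ) μ := by
    rw [Module.End.hasEigenvalue_iff_mem_spectrum]
    exact (AlgEquiv.spectrum_eq Matrix.toLinAlgEquiv' (ι γ)).ge hμ
  simpa only [Module.finrank_fin_fun] using
    ρ.pow_factorial_finrank_eq_one_of_hasEigenvalue hcen hcomm hμ'

/-- If `N ≤ SU(m)` is nilpotent of nilpotency class `s ≥ 2`, then every element `γ` of the
`s`-th term `N_(s) = lowerCentralSeries N (s-1)` of the lower central series of `N`
satisfies `γ^(m!) = 1`. -/
theorem lcs_top_term_elements_torsion (m : ℕ)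
    (N : Subgroup (Matrix.specialUnitaryGroup (Fin m) ℂ)) (s : ℕ)
    (hs : 2 ≤ s)
    (h1 : Subgroup.lowerCentralSeries (⊤ : Subgroup ↥N) (s - 1) ≠ ⊥)
    (h2 : Subgroup.lowerCentralSeries (⊤ : Subgroup ↥N) s = ⊥) :
    ∀ γ : ↥N, γ ∈ Subgroup.lowerCentralSeries (⊤ : Subgroup ↥N) (s - 1) → γ ^ (Nat.factorial m) = 1 :=
  lcs_top_term_elements_torsion_general m N s hs h2
end

section
/- Let Γ be a finitely generated nilpotent group, let K be a closed subgroup of the unitary group U(n), and let i ≥ 2. Then the subset X_i = {ρ ∈ Hom(Γ,K) : Γ_(i) ⊆ ker ρ} of the representation space Hom(Γ,K) (which is canonically homeomorphic to Hom(Γ/Γ_(i), K)) is a union of connected components of Hom(Γ,K); that is, for every ρ ∈ X_i, the connected component of ρ in Hom(Γ,K) is contained in X_i. -/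
/-- The representation space `Hom(Γ,G)`: group homomorphisms with the topology of pointwise
convergence, i.e. the topology induced from the product space `Γ → G`. -/
instance repSpaceTopology {Γ G : Type*} [Group Γ] [Group G] [TopologicalSpace G] :
    TopologicalSpace (Γ →* G) :=
  TopologicalSpace.induced (fun ρ => (ρ : Γ → G)) Pi.topologicalSpace

/-!
Let `γ ∈ Γ_(j)` with `j ≥ 1`, and let `σ` be a representation killing `Γ_(j+1)`, so that `σ γ`
is central in `σ(Γ)`. Then `σ(Γ)` preserves each eigenspace `W` of `σ γ`, and `det (σ · |W)` is a
character of `Γ`; it is trivial on `γ ∈ [Γ, Γ]`, so every eigenvalue `μ` of `σ γ` satisfies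
`μ ^ dim W = 1`. Hence `tr (σ γ)` lies in a finite set of sums of roots of unity, and is therefore
constant on a connected set of such `σ`. A unitary matrix of trace `n` is the identity, so if one
`σ` kills `γ`, all of them do. Downward induction along the lower central series, which reaches
`⊥` since `Γ` is nilpotent, proves the theorem.
-/

open Module Polynomial Matrix

open scoped ComplexOrder in
theorem Matrix.eq_one_of_mem_unitaryGroup_of_trace_eq {𝕜 ι : Type*} [RCLike 𝕜] [Fintype ι]
    [DecidableEq ι] {U : Matrix ι ι 𝕜} (hU : U ∈ unitaryGroup ι 𝕜)
    (htr : U.trace = Fintype.card ι) : U = 1 := by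
  have hUU : Uᴴ * U = 1 := (Unitary.mem_iff.mp hU).1
  have hsq : (U - 1)ᴴ * (U - 1) = 1 + 1 - Uᴴ - U := by
    rw [conjTranspose_sub, conjTranspose_one, sub_mul, mul_sub, mul_sub, hUU, mul_one, one_mul,
      one_mul]
    abel
  rw [← sub_eq_zero, ← trace_conjTranspose_mul_self_eq_zero_iff, hsq, trace_sub, trace_sub,
    trace_add, trace_conjTranspose, htr, trace_one]
  simp

def MonoidHom.restrictEnd {G R M : Type*} [Monoid G] [Semiring R] [AddCommMonoid M] [Module R M]
    (φ : G →* End R M) (p : Submodule R M) (hp : ∀ g, Set.MapsTo (φ g) p p) :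
    G →* End R p where
  toFun g := (φ g).restrict (hp g)
  map_one' := by ext; simp
  map_mul' g h := by ext; simp [End.mul_apply]; rfl

theorem Module.End.pow_factorial_finrank_eq_one_of_mem_commutator {K V G : Type*} [Field K]
    [AddCommGroup V] [Module K V] [FiniteDimensional K V] [Group G] (φ : G →* End K V) {g : G}
    (hg : g ∈ commutator G) (hcomm : ∀ x, Commute (φ g) (φ x)) {μ : K}
    (hμ : (φ g).HasEigenvalue μ) : μ ^ (finrank K V).factorial = 1 := by
  set W := (φ g).eigenspace μ
  let φW := φ.restrictEnd W fun x => End.mapsTo_genEigenspace_of_comm (hcomm x) μ 1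
  have hdet_one : LinearMap.det (φW g) = 1 := by
    simpa using congrArg Units.val
      (Abelianization.commutator_subset_ker (LinearMap.det.comp φW).toHomUnits hg)
  have hφW : φW g = μ • 1 := by
    ext ⟨v, hv⟩
    exact End.mem_eigenspace_iff.mp hv
  have hdet_pow : LinearMap.det (φW g) = μ ^ finrank K W := by
    rw [hφW, LinearMap.det_smul, map_one, mul_one]
  have hpos : 0 < finrank K W := Submodule.one_le_finrank_iff.mpr (End.hasEigenvalue_iff.mp hμ)
  obtain ⟨k, hk⟩ := Nat.dvd_factorial hpos (Submodule.finrank_le W)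
  rw [hk, pow_mul, ← hdet_pow, hdet_one, one_pow]

noncomputable def rootOfUnitySums (K : Type*) [Field K] [DecidableEq K] (N n : ℕ) : Finset K :=
  ((nthRootsFinset N (1 : K)).sym n).image fun s : Sym K n => (s : Multiset K).sum

namespace Matrix

variable {K ι : Type*} [Field K] [IsAlgClosed K] [DecidableEq K] [Fintype ι] [DecidableEq ι]

theorem trace_mem_rootOfUnitySums {N : ℕ} (hN : 0 < N) (A : Matrix ι ι K)
    (hA : ∀ μ, A.charpoly.IsRoot μ → μ ^ N = 1) :
    A.trace ∈ rootOfUnitySums K N (Fintype.card ι) := by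
  refine Finset.mem_image.mpr ⟨⟨A.charpoly.roots, ?_⟩, Finset.mem_sym_iff.mpr fun μ hμ => ?_,
    (trace_eq_sum_roots_charpoly A).symm⟩
  · rw [IsAlgClosed.card_roots_eq_natDegree, charpoly_natDegree_eq_dim]
  · exact (mem_nthRootsFinset hN 1).mpr (hA μ (isRoot_of_mem_roots hμ))

theorem trace_mem_rootOfUnitySums_of_mem_commutator {G : Type*} [Group G]
    (φ : G →* Matrix ι ι K) {g : G} (hg : g ∈ commutator G)
    (hcomm : ∀ x, Commute (φ g) (φ x)) :
    (φ g).trace ∈ rootOfUnitySums K (Fintype.card ι).factorial (Fintype.card ι) := by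
  refine trace_mem_rootOfUnitySums (Nat.factorial_pos _) _ fun μ hμ => ?_
  let ψ : G →* End K (ι → K) := toLinAlgEquiv'.toMonoidHom.comp φ
  rw [← finrank_fintype_fun_eq_card K]
  refine End.pow_factorial_finrank_eq_one_of_mem_commutator ψ hg
    (fun x => (hcomm x).map toLinAlgEquiv') ?_
  rwa [End.hasEigenvalue_iff_isRoot_charpoly, show ψ g = toLin' (φ g) from rfl,
    charpoly_toLin']

end Matrix

theorem continuous_repSpace_eval {Γ G : Type*} [Group Γ] [Group G] [TopologicalSpace G]
    (γ : Γ) : Continuous fun σ : Γ →* G => σ γ :=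
  (continuous_apply γ).comp continuous_induced_dom

section Unitary

variable {ι Γ : Type*} [Fintype ι] [DecidableEq ι] [Group Γ]
  {K : Subgroup (Matrix.unitaryGroup ι ℂ)}

open scoped commutatorElement in
theorem le_ker_of_isPreconnected_unitary {C : Set (Γ →* K)} (hC : IsPreconnected C)
    {ρ σ : Γ →* K} (hρ : ρ ∈ C) (hσ : σ ∈ C) {H : Subgroup Γ} (hH : H ≤ commutator Γ)
    (hHρ : H ≤ ρ.ker) (hcentral : ∀ τ ∈ C, ⁅H, ⊤⁆ ≤ τ.ker) : H ≤ σ.ker := by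
  classical
  intro γ hγ
  let toMatrix : K →* Matrix ι ι ℂ := (unitary (Matrix ι ι ℂ)).subtype.comp K.subtype
  have hmaps : Set.MapsTo (fun τ : Γ →* K => (toMatrix (τ γ)).trace) C
      (rootOfUnitySums ℂ (Fintype.card ι).factorial (Fintype.card ι)) := by
    intro τ hτ
    refine Matrix.trace_mem_rootOfUnitySums_of_mem_commutator (toMatrix.comp τ) (hH hγ)
      fun x => ?_
    have hτγx : τ ⁅γ, x⁆ = 1 :=
      hcentral τ hτ (Subgroup.commutator_mem_commutator hγ (Subgroup.mem_top x))
    rw [map_commutatorElement, commutatorElement_eq_one_iff_commute] at hτγx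
    exact hτγx.map toMatrix
  have hcont : Continuous fun τ : Γ →* K => (toMatrix (τ γ)).trace :=
    (continuous_subtype_val.comp
      (continuous_subtype_val.comp (continuous_repSpace_eval γ))).matrix_trace
  have htrace : (toMatrix (σ γ)).trace = Fintype.card ι := by
    rw [hC.constant_of_mapsTo (Finset.finite_toSet _).isDiscrete hcont.continuousOn hmaps hσ hρ,
      hHρ hγ]
    simp
  exact Subtype.ext <| Subtype.ext <|
    Matrix.eq_one_of_mem_unitaryGroup_of_trace_eq (σ γ : Matrix.unitaryGroup ι ℂ).2 htrace

theorem lowerCentralSeries_le_ker_of_isPreconnected_unitary [Group.IsNilpotent Γ]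
    {C : Set (Γ →* K)} (hC : IsPreconnected C) {ρ σ : Γ →* K} (hρ : ρ ∈ C) (hσ : σ ∈ C)
    {j : ℕ} (hj : 1 ≤ j) (hjρ : (⊤ : Subgroup Γ).lowerCentralSeries j ≤ ρ.ker) :
    (⊤ : Subgroup Γ).lowerCentralSeries j ≤ σ.ker := by
  refine Nat.decreasingInduction'
    (P := fun k => ∀ τ ∈ C, (⊤ : Subgroup Γ).lowerCentralSeries k ≤ τ.ker)
    (fun k _ hjk hsucc τ hτ => ?_) (le_max_left j (Group.nilpotencyClass Γ)) (fun τ _ => ?_) σ hσ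
  · have hk : (⊤ : Subgroup Γ).lowerCentralSeries k ≤ commutator Γ :=
      Subgroup.top_lowerCentralSeries_one (G := Γ) ▸
        Subgroup.lowerCentralSeries_antitone _ (hj.trans hjk)
    exact le_ker_of_isPreconnected_unitary hC hρ hτ hk
      ((Subgroup.lowerCentralSeries_antitone _ hjk).trans hjρ) hsucc
  · rw [Subgroup.lowerCentralSeries_eq_bot_iff_nilpotencyClass_le.mpr (le_max_right _ _)]
    exact bot_le

end Unitary

theorem factoring_reps_union_of_components_unitary_general
    (n : ℕ) (K : Subgroup (Matrix.unitaryGroup (Fin n) ℂ))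
    (Γ : Type*) [Group Γ] (hnil : Group.IsNilpotent Γ)
    (i : ℕ) (hi : 2 ≤ i)
    (ρ : Γ →* ↥K) (hρ : (⊤ : Subgroup Γ).lowerCentralSeries (i - 1) ≤ ρ.ker) :
    connectedComponent ρ ⊆ {σ : Γ →* ↥K | (⊤ : Subgroup Γ).lowerCentralSeries (i - 1) ≤ σ.ker} :=
  fun _ hσ => lowerCentralSeries_le_ker_of_isPreconnected_unitary isPreconnected_connectedComponent
    mem_connectedComponent hσ (by omega) hρ

/-- Let `Γ` be a finitely generated nilpotent group, `K` a closed subgroup of `U(n)` and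
`i ≥ 2`. The subset `X_i = {ρ : Γ_(i) ⊆ ker ρ}` of `Hom(Γ,K)` (canonically homeomorphic to
`Hom(Γ/Γ_(i),K)`) is a union of connected components of `Hom(Γ,K)`. -/
theorem factoring_reps_union_of_components_unitary
    (n : ℕ) (K : Subgroup (Matrix.unitaryGroup (Fin n) ℂ))
    (hK : IsClosed (K : Set (Matrix.unitaryGroup (Fin n) ℂ)))
    (Γ : Type*) [Group Γ] (hfg : Group.FG Γ) (hnil : Group.IsNilpotent Γ)
    (i : ℕ) (hi : 2 ≤ i)
    (ρ : Γ →* ↥K) (hρ : (⊤ : Subgroup Γ).lowerCentralSeries (i - 1) ≤ ρ.ker) :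
    connectedComponent ρ ⊆ {σ : Γ →* ↥K | (⊤ : Subgroup Γ).lowerCentralSeries (i - 1) ≤ σ.ker} :=
  factoring_reps_union_of_components_unitary_general n K Γ hnil i hi ρ hρ
end

section
/- Let Γ be a finitely generated nilpotent group whose abelianization is isomorphic to ℤ^r × A with A a finite abelian group, and let K be a closed subgroup of the unitary group U(n). Then the connected component of the trivial homomorphism in the representation space Hom(Γ,K) is homeomorphic to the connected component of the trivial homomorphism in the representation space Hom(ℤ^r, K). -/
open Filter Module Set Topology
open scoped commutatorElement

namespace Subgroup

variable {Γ : Type*} [Group Γ]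

theorem commutator_top_le_iff {H R : Subgroup Γ} [R.Normal] :
    ⁅H, ⊤⁆ ≤ R ↔ H ≤ upperCentralSeriesStep R := by
  rw [commutator_le]
  exact ⟨fun h x hx y => h x hx y (mem_top y), fun h x hx y _ => h hx y⟩

theorem mem_upperCentralSeriesStep_of_closure_eq_top {R : Subgroup Γ} [R.Normal] {S : Set Γ}
    (hS : closure S = ⊤) {x : Γ} (hx : ∀ s ∈ S, ⁅x, s⁆ ∈ R) : x ∈ upperCentralSeriesStep R := by
  let q := QuotientGroup.mk' R
  have hmem : ∀ y, ⁅x, y⁆ ∈ R ↔ y ∈ (Subgroup.centralizer {q x}).comap q := fun y => by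
    rw [mem_comap, mem_centralizer_singleton_iff, ← QuotientGroup.eq_one_iff (N := R),
      ← QuotientGroup.mk'_apply, map_commutatorElement, commutatorElement_eq_one_iff_commute]
    exact ⟨fun h => h.symm.eq, fun h => h.symm⟩
  have hle : closure S ≤ (Subgroup.centralizer {q x}).comap q :=
    closure_le _ |>.mpr fun s hs => (hmem s).mp (hx s hs)
  exact fun y => (hmem y).mpr (hle (hS ▸ mem_top y))

def iteratedCommutators (S : Set Γ) : ℕ → Set Γ
  | 0 => S
  | i + 1 => image2 (fun x s => ⁅x, s⁆) (iteratedCommutators S i) S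

theorem finite_iteratedCommutators {S : Set Γ} (hS : S.Finite) :
    ∀ i, (iteratedCommutators S i).Finite
  | 0 => hS
  | i + 1 => (finite_iteratedCommutators hS i).image2 _ hS

theorem iteratedCommutators_subset_lowerCentralSeries (S : Set Γ) :
    ∀ i, iteratedCommutators S i ⊆ (⊤ : Subgroup Γ).lowerCentralSeries i
  | 0 => fun x _ => mem_top x
  | i + 1 => by
    rintro _ ⟨x, hx, s, -, rfl⟩
    exact commutator_mem_commutator (iteratedCommutators_subset_lowerCentralSeries S i hx)
      (mem_top s)

theorem lowerCentralSeries_le_normalClosure_sup {S : Set Γ} (hS : closure S = ⊤) :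
    ∀ i, (⊤ : Subgroup Γ).lowerCentralSeries i ≤
      normalClosure (iteratedCommutators S i) ⊔ (⊤ : Subgroup Γ).lowerCentralSeries (i + 1)
  | 0 => le_sup_of_le_left (hS.ge.trans closure_le_normalClosure)
  | i + 1 => by
    set R := normalClosure (iteratedCommutators S (i + 1)) ⊔
      (⊤ : Subgroup Γ).lowerCentralSeries (i + 2)
    have : (upperCentralSeriesStep R).Normal :=
      upperCentralSeriesStep_eq_comap_center R ▸ normal_comap _
    refine commutator_top_le_iff.mpr <|
      (lowerCentralSeries_le_normalClosure_sup hS i).trans (sup_le ?_ ?_)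
    · refine normalClosure_le_normal fun f hf => mem_upperCentralSeriesStep_of_closure_eq_top hS ?_
      exact fun s hs => mem_sup_left (subset_normalClosure (mem_image2_of_mem hf hs))
    · exact commutator_top_le_iff.mp le_sup_right

end Subgroup

open Subgroup in
theorem commutator_le_ker_of_iteratedCommutators {Γ G : Type*} [Group Γ] [Group G]
    (ρ : Γ →* G) {S : Set Γ} (hS : closure S = ⊤) {c : ℕ}
    (hc : (⊤ : Subgroup Γ).lowerCentralSeries c = ⊥)
    (h : ∀ i ∈ Finset.Ico 1 c, ∀ f ∈ iteratedCommutators S i,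
      (∀ g, Commute (ρ f) (ρ g)) → ρ f = 1) :
    commutator Γ ≤ ρ.ker := by
  have hstep : ∀ i ∈ Finset.Ico 1 c, (⊤ : Subgroup Γ).lowerCentralSeries (i + 1) ≤ ρ.ker →
      (⊤ : Subgroup Γ).lowerCentralSeries i ≤ ρ.ker := fun i hi hnext => by
    refine (lowerCentralSeries_le_normalClosure_sup hS i).trans
      (sup_le (normalClosure_le_normal fun f hf => ?_) hnext)
    refine h i hi f hf fun g => commutatorElement_eq_one_iff_commute.mp ?_
    rw [← map_commutatorElement]
    exact hnext (commutator_mem_commutator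
      (iteratedCommutators_subset_lowerCentralSeries S i hf) (mem_top g))
  rw [← top_lowerCentralSeries_one]
  refine Nat.decreasingInduction' (fun i hi h1i => hstep i ?_) (le_max_right c 1)
    (((Subgroup.lowerCentralSeries_antitone _ (le_max_left c 1)).trans hc.le).trans bot_le)
  simp only [Finset.mem_Ico]
  omega

open Subgroup in
theorem Group.exists_finite_commutator_le_ker (Γ G : Type*) [Group Γ] [Group G] [Group.FG Γ]
    [Group.IsNilpotent Γ] :
    ∃ F : Set Γ, F.Finite ∧ F ⊆ commutator Γ ∧ ∀ ρ : Γ →* G,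
      (∀ f ∈ F, (∀ g, Commute (ρ f) (ρ g)) → ρ f = 1) → commutator Γ ≤ ρ.ker := by
  obtain ⟨S, hS, hSfin⟩ := Group.fg_iff.mp ‹Group.FG Γ›
  obtain ⟨c, hc⟩ := Subgroup.nilpotent_iff_lowerCentralSeries.mp ‹Group.IsNilpotent Γ›
  refine ⟨⋃ i ∈ Finset.Ico 1 c, iteratedCommutators S i,
    (Finset.finite_toSet _).biUnion fun i _ => finite_iteratedCommutators hSfin i, ?_,
    fun ρ hρ => commutator_le_ker_of_iteratedCommutators ρ hS hc fun i hi f hf =>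
      hρ f (mem_biUnion hi hf)⟩
  simp only [iUnion_subset_iff]
  intro i hi f hf
  rw [← top_lowerCentralSeries_one]
  exact Subgroup.lowerCentralSeries_antitone _ (Finset.mem_Ico.mp hi).1
    (iteratedCommutators_subset_lowerCentralSeries S i hf)

theorem le_ker_of_commutator_le_ker {Γ G : Type*} [Group Γ] [Group G] {N : Subgroup Γ}
    {ρ : Γ →* G} (hcomm : commutator Γ ≤ ρ.ker)
    {t : N.map (Abelianization.of : Γ →* Abelianization Γ) → Γ}
    (htof : ∀ a, Abelianization.of (t a) = a) (ht : ∀ a, ρ (t a) = 1) : N ≤ ρ.ker := by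
  intro g hg
  set a : N.map Abelianization.of := ⟨Abelianization.of g, Subgroup.mem_map_of_mem _ hg⟩
  have hga : g * (t a)⁻¹ ∈ commutator Γ := by
    rw [← Abelianization.ker_of, MonoidHom.mem_ker, map_mul, map_inv, htof, mul_inv_cancel]
  rw [MonoidHom.mem_ker, ← inv_mul_cancel_right g (t a), map_mul, ht, mul_one]
  exact hcomm hga

theorem pow_factorial_finrank_eq_one_of_mem_spectrum {k V Γ : Type*} [Field k] [AddCommGroup V]
    [Module k V] [FiniteDimensional k V] [Group Γ] (ρ : Γ →* End k V) {w : Γ}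
    (hw : w ∈ commutator Γ) (hcomm : ∀ g, Commute (ρ w) (ρ g)) {μ : k}
    (hμ : μ ∈ spectrum k (ρ w)) : μ ^ (finrank k V).factorial = 1 := by
  set E := (ρ w).eigenspace μ
  have hE : ∀ g, Set.MapsTo (ρ g) E E := fun g =>
    End.mapsTo_genEigenspace_of_comm (hcomm g) μ 1
  let detE : Γ →* kˣ := MonoidHom.toHomUnits
    { toFun := fun g => LinearMap.det ((ρ g).restrict (hE g))
      map_one' := by
        rw [← LinearMap.det_id (A := k) (M := E)]
        congr 1
        ext
        simp
      map_mul' := fun g h => by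
        rw [← LinearMap.det_comp]
        congr 1
        ext x
        exact DFunLike.congr_fun (map_mul ρ g h) (x : V) }
  have hdet : μ ^ finrank k E = 1 := by
    have h1 : detE w = 1 := Abelianization.commutator_subset_ker detE hw
    have h2 : (ρ w).restrict (hE w) = μ • LinearMap.id := by
      ext ⟨x, hx⟩
      exact End.mem_eigenspace_iff.mp hx
    simpa [detE, h2, LinearMap.det_smul] using congrArg Units.val h1
  have hpos : 0 < finrank k E :=
    Submodule.one_le_finrank_iff.mpr (End.hasEigenvalue_iff_mem_spectrum.mpr hμ)
  obtain ⟨q, hq⟩ := Nat.dvd_factorial hpos (Submodule.finrank_le E)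
  rw [hq, pow_mul, hdet, one_pow]

theorem Matrix.pow_factorial_card_eq_one_of_mem_spectrum {k m Γ : Type*} [Field k] [Fintype m]
    [DecidableEq m] [Group Γ] (ρ : Γ →* Matrix m m k) {w : Γ} (hw : w ∈ commutator Γ)
    (hcomm : ∀ g, Commute (ρ w) (ρ g)) {μ : k} (hμ : μ ∈ spectrum k (ρ w)) :
    μ ^ (Fintype.card m).factorial = 1 := by
  let toLin : Matrix m m k →* End k (m → k) := Matrix.toLinAlgEquiv'.toMonoidHom
  simpa using pow_factorial_finrank_eq_one_of_mem_spectrum (toLin.comp ρ) hw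
    (fun g => (hcomm g).map toLin) (by simpa [toLin, AlgEquiv.spectrum_eq] using hμ)

theorem spectrum.pow_eq_one_of_pow_eq_one {k A : Type*} [Field k] [Ring A] [Algebra k A] {u : A}
    {e : ℕ} (hu : u ^ e = 1) {μ : k} (hμ : μ ∈ spectrum k u) : μ ^ e = 1 := by
  rcases subsingleton_or_nontrivial A with hA | hA
  · simp [spectrum.of_subsingleton] at hμ
  · simpa [hu, spectrum.one_eq] using spectrum.pow_mem_pow u e hμ

theorem Complex.eventually_eq_one_of_pow_eq_one {e : ℕ} (he : 0 < e) :
    ∀ᶠ μ in 𝓝 (1 : ℂ), μ ^ e = 1 → μ = 1 := by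
  have hfin : {μ : ℂ | μ ^ e = 1 ∧ μ ≠ 1}.Finite :=
    ((Polynomial.nthRoots e (1 : ℂ)).toFinset.finite_toSet).subset fun μ hμ => by
      simpa [Polynomial.mem_nthRoots he] using hμ.1
  filter_upwards [hfin.isClosed.isOpen_compl.mem_nhds fun h => h.2 rfl] with μ hμ hμe
  by_contra hne
  exact hμ ⟨hμe, hne⟩

theorem IsStarNormal.eq_one_of_norm_sub_one_lt {A : Type*} [CStarAlgebra A] {u : A}
    [IsStarNormal u] {ε : ℝ} {P : ℂ → Prop} (hε : ∀ μ, P μ → ‖μ - 1‖ < ε → μ = 1)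
    (hspec : ∀ μ ∈ spectrum ℂ u, P μ) (hu : ‖u - 1‖ < ε) : u = 1 := by
  nontriviality A
  refine CFC.eq_one_of_spectrum_subset_one (R := ℂ) u fun μ hμ => hε μ (hspec μ hμ) ?_
  have hμ1 : μ - 1 ∈ spectrum ℂ (u - 1) := by
    have := spectrum.sub_singleton_eq u (1 : ℂ) ▸ Set.sub_mem_sub hμ (Set.mem_singleton 1)
    rwa [map_one] at this
  exact (spectrum.norm_le_norm_of_mem hμ1).trans_lt hu

open scoped Matrix.Norms.L2Operator in
theorem Matrix.UnitaryGroup.eventually_eq_one_of_spectrum_pow_eq_one {m : Type*} [Fintype m]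
    [DecidableEq m] {e : ℕ} (he : 0 < e) :
    ∀ᶠ u : Matrix.unitaryGroup m ℂ in 𝓝 1,
      (∀ μ ∈ spectrum ℂ (u : Matrix m m ℂ), μ ^ e = 1) → u = 1 := by
  obtain ⟨ε, hε, hball⟩ :=
    Metric.eventually_nhds_iff.mp (Complex.eventually_eq_one_of_pow_eq_one he)
  have hnhds : {u : Matrix.unitaryGroup m ℂ | dist (u : Matrix m m ℂ) 1 < ε} ∈ 𝓝 1 :=
    (Metric.isOpen_ball.preimage continuous_subtype_val).mem_nhds (by simpa using hε)
  filter_upwards [hnhds] with u hu hspec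
  rw [dist_eq_norm] at hu
  exact Subtype.ext <| IsStarNormal.eq_one_of_norm_sub_one_lt (ε := ε)
    (fun μ hμe hμ => hball (by rwa [dist_eq_norm]) hμe) hspec hu

theorem Topology.IsEmbedding.image_connectedComponent {X Y : Type*} [TopologicalSpace X]
    [TopologicalSpace Y] {f : X → Y} (hf : IsEmbedding f) (hrange : IsClopen (range f)) (x : X) :
    f '' connectedComponent x = connectedComponent (f x) := by
  refine (hf.continuous.image_connectedComponent_subset x).antisymm ?_
  have hsub : connectedComponent (f x) ⊆ range f := hrange.connectedComponent_subset ⟨x, rfl⟩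
  have himage : f '' (f ⁻¹' connectedComponent (f x)) = connectedComponent (f x) :=
    image_preimage_eq_of_subset hsub
  have hpre : IsPreconnected (f ⁻¹' connectedComponent (f x)) := by
    rw [← hf.isInducing.isPreconnected_image, himage]
    exact isPreconnected_connectedComponent
  rw [← himage]
  exact image_mono (hpre.subset_connectedComponent mem_connectedComponent)

theorem Topology.IsEmbedding.nonempty_homeomorph_connectedComponent {X Y : Type*}
    [TopologicalSpace X] [TopologicalSpace Y] {f : X → Y} (hf : IsEmbedding f)
    (hrange : IsClopen (range f)) (x : X) :
    Nonempty (connectedComponent x ≃ₜ connectedComponent (f x)) :=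
  ⟨(hf.homeomorphImage _).trans (.setCongr (hf.image_connectedComponent hrange x))⟩

namespace MonoidHom

variable {Γ Z G : Type*} [Group Γ] [Group Z] [Group G]

theorem range_comp_right {π : Γ →* Z} (hπ : Function.Surjective π) :
    Set.range (fun σ : Z →* G => σ.comp π) = {ρ : Γ →* G | π.ker ≤ ρ.ker} := by
  ext ρ
  refine ⟨?_, fun hρ => ⟨π.liftOfSurjective hπ ⟨ρ, hρ⟩, π.liftOfRightInverse_comp _ _ _⟩⟩
  rintro ⟨σ, rfl⟩
  exact fun g hg => by simp [mem_ker.mp hg]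

variable [TopologicalSpace G]

theorem continuous_eval (g : Γ) : Continuous fun ρ : Γ →* G => ρ g :=
  (continuous_apply g).comp continuous_induced_dom

theorem continuous_comp_left {H : Type*} [Group H] [TopologicalSpace H] {j : G →* H}
    (hj : Continuous j) : Continuous fun ρ : Γ →* G => j.comp ρ :=
  continuous_induced_rng.mpr (continuous_pi fun g => hj.comp (continuous_eval g))

theorem isEmbedding_comp_right {π : Γ →* Z} (hπ : Function.Surjective π) :
    IsEmbedding fun σ : Z →* G => σ.comp π := by
  have hleft : (fun (ρ : Γ →* G) z => ρ (Function.surjInv hπ z)) ∘ (fun σ : Z →* G => σ.comp π)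
      = fun σ : Z →* G => (σ : Z → G) := by
    funext σ z
    simp [Function.surjInv_eq hπ]
  refine ⟨.of_comp (continuous_induced_rng.mpr (continuous_pi fun g => continuous_eval (π g)))
    (continuous_pi fun z => continuous_eval (Function.surjInv hπ z)) (hleft ▸ ⟨rfl⟩), ?_⟩
  exact fun σ τ h => cancel_right hπ |>.mp h

theorem isClosed_setOf_le_ker [T1Space G] (N : Subgroup Γ) :
    IsClosed {ρ : Γ →* G | N ≤ ρ.ker} := by
  simp only [SetLike.le_def, mem_ker, ofPred_forall]
  exact isClosed_biInter fun g _ => isClosed_singleton.preimage (continuous_eval g)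

end MonoidHom

theorem isOpen_setOf_le_ker_unitaryGroup {Γ m : Type*} [Group Γ] [Group.FG Γ]
    [Group.IsNilpotent Γ] [Fintype m] [DecidableEq m] {N : Subgroup Γ}
    (hN : commutator Γ ≤ N) [Finite (N.map (Abelianization.of : Γ →* Abelianization Γ))] :
    IsOpen {ρ : Γ →* Matrix.unitaryGroup m ℂ | N ≤ ρ.ker} := by
  obtain ⟨F, hFfin, hFcomm, hF⟩ :=
    Group.exists_finite_commutator_le_ker Γ (Matrix.unitaryGroup m ℂ)
  set M := N.map (Abelianization.of : Γ →* Abelianization Γ)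
  choose t htN htof using fun a : M => Subgroup.mem_map.mp a.2
  set e := (Fintype.card m).factorial * Nat.card M
  obtain ⟨V, hV, hVopen, hV1⟩ := eventually_nhds_iff.mp <|
    Matrix.UnitaryGroup.eventually_eq_one_of_spectrum_pow_eq_one (m := m) (e := e)
      (Nat.mul_pos (Nat.factorial_pos _) Nat.card_pos)
  suffices {ρ : Γ →* Matrix.unitaryGroup m ℂ | N ≤ ρ.ker} = ⋂ f ∈ F ∪ range t, {ρ | ρ f ∈ V} by
    rw [this]
    exact (hFfin.union (finite_range t)).isOpen_biInter fun f _ =>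
      hVopen.preimage (MonoidHom.continuous_eval f)
  ext ρ
  simp only [mem_ofPred_eq, mem_iInter]
  refine ⟨fun hρ f hf => ?_, fun hρ => ?_⟩
  · have hfN : f ∈ N := hf.elim (fun hf => hN (hFcomm hf)) fun ⟨a, ha⟩ => ha ▸ htN a
    rwa [hρ hfN]
  have hkill : ∀ f ∈ F ∪ range t, ∀ d, d ∣ e →
      (∀ μ ∈ spectrum ℂ (ρ f : Matrix m m ℂ), μ ^ d = 1) → ρ f = 1 :=
    fun f hf d ⟨q, hq⟩ hd => hV _ (hρ f hf) fun μ hμ => by rw [hq, pow_mul, hd μ hμ, one_pow]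
  have hcomm : commutator Γ ≤ ρ.ker := hF ρ fun f hf hcentral =>
    hkill f (.inl hf) _ (dvd_mul_right _ _) fun μ =>
      Matrix.pow_factorial_card_eq_one_of_mem_spectrum ((Matrix.unitaryGroup m ℂ).subtype.comp ρ)
        (hFcomm hf) fun g => (hcentral g).map (Matrix.unitaryGroup m ℂ).subtype
  refine le_ker_of_commutator_le_ker hcomm htof fun a => ?_
  have hpow : ρ (t a) ^ Nat.card M = 1 := by
    rw [← map_pow]
    refine hcomm (Abelianization.ker_of Γ ▸ ?_)
    rw [MonoidHom.mem_ker, map_pow, htof, ← Subgroup.coe_pow, pow_card_eq_one', Subgroup.coe_one]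
  refine hkill _ (.inr ⟨a, rfl⟩) _ (dvd_mul_left _ _) fun μ => spectrum.pow_eq_one_of_pow_eq_one ?_
  simpa using congrArg Subtype.val hpow

theorem component_of_trivial_homeomorphic_abelian_general
    (n : ℕ) (K : Subgroup (Matrix.unitaryGroup (Fin n) ℂ))
    (Γ : Type*) [Group Γ] (hfg : Group.FG Γ) (hnil : Group.IsNilpotent Γ)
    (r : ℕ) (A : Type*) [CommGroup A] [Finite A]
    (hab : Nonempty (Abelianization Γ ≃* Multiplicative (Fin r → ℤ) × A)) :
    Nonempty
      (↥(connectedComponent (1 : Γ →* ↥K)) ≃ₜ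
        ↥(connectedComponent (1 : Multiplicative (Fin r → ℤ) →* ↥K))) := by
  obtain ⟨eab⟩ := hab
  let φ : Abelianization Γ →* Multiplicative (Fin r → ℤ) × A := eab
  let π := (MonoidHom.fst _ A).comp (φ.comp Abelianization.of)
  have hπ : Function.Surjective π :=
    Prod.fst_surjective.comp (eab.surjective.comp QuotientGroup.mk_surjective)
  have : Finite (π.ker.map (Abelianization.of : Γ →* Abelianization Γ)) := by
    have hfst : ∀ x ∈ π.ker.map Abelianization.of, (φ x).1 = 1 := by
      rintro _ ⟨g, hg, rfl⟩
      exact hg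
    exact Finite.of_injective (fun x => (φ x).2) fun x y hxy => Subtype.ext <| eab.injective <|
      Prod.ext ((hfst x x.2).trans (hfst y y.2).symm) hxy
  have hopen : IsOpen {ρ : Γ →* K | π.ker ≤ ρ.ker} := by
    have := (isOpen_setOf_le_ker_unitaryGroup (m := Fin n)
      (Abelianization.commutator_subset_ker π)).preimage
      (MonoidHom.continuous_comp_left (Γ := Γ) (j := K.subtype) continuous_subtype_val)
    simpa [MonoidHom.ker_comp_of_injective _ _ K.subtype_injective] using this
  have hclopen : IsClopen (range fun σ : Multiplicative (Fin r → ℤ) →* K => σ.comp π) :=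
    MonoidHom.range_comp_right (G := K) hπ ▸ ⟨MonoidHom.isClosed_setOf_le_ker _, hopen⟩
  obtain ⟨h⟩ := (MonoidHom.isEmbedding_comp_right hπ).nonempty_homeomorph_connectedComponent
    hclopen 1
  exact ⟨(h.trans (.setCongr (by rw [MonoidHom.one_comp]))).symm⟩

/-- Let `Γ` be a finitely generated nilpotent group with abelianization `ℤ^r × A`, `A` finite
abelian, and let `K` be a closed subgroup of `U(n)`. Then the connected component of the
trivial homomorphism in `Hom(Γ,K)` is homeomorphic to the connected component of the trivial
homomorphism in `Hom(ℤ^r,K)`. -/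
theorem component_of_trivial_homeomorphic_abelian
    (n : ℕ) (K : Subgroup (Matrix.unitaryGroup (Fin n) ℂ))
    (hK : IsClosed (K : Set (Matrix.unitaryGroup (Fin n) ℂ)))
    (Γ : Type*) [Group Γ] (hfg : Group.FG Γ) (hnil : Group.IsNilpotent Γ)
    (r : ℕ) (A : Type*) [CommGroup A] [Finite A]
    (hab : Nonempty (Abelianization Γ ≃* Multiplicative (Fin r → ℤ) × A)) :
    Nonempty
      (↥(connectedComponent (1 : Γ →* ↥K)) ≃ₜ
        ↥(connectedComponent (1 : Multiplicative (Fin r → ℤ) →* ↥K))) :=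
  component_of_trivial_homeomorphic_abelian_general n K Γ hfg hnil r A hab
end

section
/- Let A be a finite group and let K be a closed subgroup of the unitary group U(n). If a homomorphism ρ : A →* K is joined by a continuous path in the representation space Hom(A,K) to the trivial homomorphism 𝟙, then ρ = 𝟙. (Equivalently, since Lie groups have no small subgroups, the path component of the trivial homomorphism in Hom(A,K) consists of the trivial homomorphism alone.) -/
attribute [local instance] Matrix.frobeniusNormedRing Matrix.frobeniusNormedSpace

/-- Let `A` be a finite group and `K` a closed subgroup of `U(n)`. If `ρ : A →* K` is joined
by a continuous path in `Hom(A,K)` to the trivial homomorphism, then `ρ` is trivial. -/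
theorem joined_to_trivial_of_finite_implies_trivial
    (n : ℕ) (K : Subgroup (Matrix.unitaryGroup (Fin n) ℂ))
    (hK : IsClosed (K : Set (Matrix.unitaryGroup (Fin n) ℂ)))
    (A : Type*) [Group A] [Finite A]
    (ρ : A →* ↥K) (h : Joined (1 : A →* ↥K) ρ) : ρ = 1 := by
  obtain ⟨γ⟩ := h
  -- F a t : the matrix γ(t)(a)
  set F : A → unitInterval → Matrix (Fin n) (Fin n) ℂ :=
    fun a t => ((γ t a : Matrix.unitaryGroup (Fin n) ℂ) : Matrix (Fin n) (Fin n) ℂ) with hF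
  have hFcont : ∀ a, Continuous (F a) := by
    intro a
    exact continuous_subtype_val.comp
      (continuous_subtype_val.comp (((continuous_apply a).comp continuous_induced_dom).comp
        γ.continuous))
  have hFmul : ∀ a b t, F (a * b) t = F a t * F b t := by
    intro a b t
    simp [hF, map_mul]
  have hFone : ∀ a t, F a t = 1 ↔ γ t a = 1 := by
    intro a t
    constructor
    · intro h1
      exact Subtype.ext (Subtype.ext h1)
    · intro h1; simp [hF, h1]
  set S : Set unitInterval := {t | ∀ a, γ t a = 1} with hS
  have hSclosed : IsClosed S := by
    have : S = ⋂ a, (F a) ⁻¹' {1} := by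
      ext t; simp [hS, hFone]
    rw [this]
    exact isClosed_iInter fun a => (isClosed_singleton).preimage (hFcont a)
  have hSopen : IsOpen S := by
    rw [isOpen_iff_mem_nhds]
    intro t₀ ht₀
    have hU : IsOpen (⋂ a, (F a) ⁻¹' Metric.ball 1 (1/2)) :=
      isOpen_iInter_of_finite fun a => (Metric.isOpen_ball).preimage (hFcont a)
    have htU : t₀ ∈ ⋂ a, (F a) ⁻¹' Metric.ball 1 (1/2) := by
      refine Set.mem_iInter.2 fun a => ?_
      have : F a t₀ = 1 := (hFone a t₀).2 (ht₀ a)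
      simp [this, Set.mem_preimage, Metric.mem_ball]
    refine Filter.mem_of_superset (hU.mem_nhds htU) ?_
    intro t ht
    have hball : ∀ a, ‖F a t - 1‖ < 1/2 := by
      intro a
      have := Set.mem_iInter.1 ht a
      simpa [Metric.mem_ball, dist_eq_norm] using this
    -- pick a maximizing the norm
    obtain ⟨a₀, ha₀⟩ := Finite.exists_max (fun a : A => ‖F a t - 1‖)
    set d : ℝ := ‖F a₀ t - 1‖ with hd
    have hd0 : d = 0 := by
      by_contra hdne
      have hdpos : 0 < d := lt_of_le_of_ne (norm_nonneg _) (Ne.symm hdne)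
      set x : Matrix (Fin n) (Fin n) ℂ := F a₀ t with hx
      have key : (x - 1) + (x - 1) = (x * x - 1) - (x - 1) * (x - 1) := by noncomm_ring
      have h2d : (2:ℝ) * d = ‖(x - 1) + (x - 1)‖ := by
        rw [← two_smul ℝ (x - 1), norm_smul]
        simp [hd]
      have hle : (2:ℝ) * d ≤ ‖x * x - 1‖ + ‖(x - 1) * (x - 1)‖ := by
        rw [h2d, key]
        exact norm_sub_le _ _
      have hxx : x * x = F (a₀ * a₀) t := (hFmul a₀ a₀ t).symm
      have h1 : ‖x * x - 1‖ ≤ d := by rw [hxx]; exact ha₀ (a₀ * a₀)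
      have h2 : ‖(x - 1) * (x - 1)‖ ≤ d * d := by
        calc ‖(x - 1) * (x - 1)‖ ≤ ‖x - 1‖ * ‖x - 1‖ := norm_mul_le _ _
        _ = d * d := by rw [hd]
      have hdlt : d < 1/2 := hball a₀
      nlinarith
    intro a
    refine (hFone a t).1 ?_
    have : ‖F a t - 1‖ ≤ 0 := hd0 ▸ ha₀ a
    have h0 : F a t - 1 = 0 := norm_le_zero_iff.1 this
    exact sub_eq_zero.1 h0
  have hne : S.Nonempty := ⟨0, by intro a; simp [γ.source]⟩
  have : S = Set.univ := (IsClopen.eq_univ ⟨hSclosed, hSopen⟩ hne)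
  have h1 : (1 : unitInterval) ∈ S := this ▸ Set.mem_univ _
  ext a
  have := h1 a
  rw [γ.target] at this
  simp [this]
end

section
/- Let Γ be a finitely generated nilpotent group and let K be a closed subgroup of the unitary group U(n). Let K act on the representation space Hom(Γ,K) by conjugation ((k•ρ)(γ) = k ρ(γ) k⁻¹), let Hom(Γ,K)/K denote the orbit space with the quotient topology, and let q : Hom(Γ,K) → Hom(Γ,K)/K be the quotient map. Then the image under q of the connected component of the trivial homomorphism 𝟙 equals the connected component of q(𝟙) in Hom(Γ,K)/K. -/
/-- The conjugation action of `G` on `Hom(Γ,G)`: `(k • ρ) γ = k * ρ γ * k⁻¹`. -/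
instance conjAction {Γ G : Type*} [Group Γ] [Group G] : MulAction G (Γ →* G) where
  smul k ρ := ((MulAut.conj k).toMonoidHom).comp ρ
  one_smul ρ := MonoidHom.ext fun γ => by
    show (MulAut.conj (1 : G)).toMonoidHom.comp ρ γ = ρ γ
    simp
  mul_smul k₁ k₂ ρ := MonoidHom.ext fun γ => by
    show (MulAut.conj (k₁ * k₂)).toMonoidHom.comp ρ γ =
      (MulAut.conj k₁).toMonoidHom.comp ((MulAut.conj k₂).toMonoidHom.comp ρ) γ
    simp [mul_assoc]

open MulAction Set Topology

/-- General topological lemma: if a compact group `G` acts continuously on a compact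
Hausdorff space `X` and fixes a point `x`, then the image of the connected component of `x`
in the orbit space is the connected component of the image of `x`. -/
lemma aux_image_component {G X : Type*} [Group G] [MulAction G X] [TopologicalSpace G]
    [TopologicalSpace X] [CompactSpace G] [CompactSpace X] [T2Space X]
    (hc : Continuous fun p : G × X => p.1 • p.2) (x : X) (hx : ∀ k : G, k • x = x) :
    Quotient.mk (orbitRel G X) '' connectedComponent x
      = connectedComponent (Quotient.mk (orbitRel G X) x) := by
  haveI : ContinuousConstSMul G X :=
    ⟨fun k => hc.comp (continuous_const.prodMk continuous_id)⟩
  set q : X → Quotient (orbitRel G X) := Quotient.mk (orbitRel G X) with hqdef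
  have hqc : Continuous q := continuous_quot_mk
  have hqo : IsOpenMap q := MulAction.isOpenQuotientMap_quotientMk.isOpenMap
  have hqeq : ∀ a b : X, q a = q b ↔ ∃ k : G, k • b = a := by
    intro a b
    constructor
    · intro h
      exact MulAction.mem_orbit_iff.mp ((MulAction.orbitRel_apply).mp (Quotient.exact h))
    · rintro ⟨k, hk⟩
      exact Quotient.sound ((MulAction.orbitRel_apply).mpr (MulAction.mem_orbit_iff.mpr ⟨k, hk⟩))
  -- membership criterion for images of saturated sets
  have hmemiff : ∀ (W : Set X), (∀ (k : G) ρ, ρ ∈ W → k • ρ ∈ W) →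
      ∀ a, q a ∈ q '' W ↔ a ∈ W := by
    intro W hsat a
    constructor
    · rintro ⟨b, hb, hab⟩
      obtain ⟨k, rfl⟩ := (hqeq a b).mp hab.symm
      exact hsat k b hb
    · exact fun h => ⟨a, h, rfl⟩
  -- images of saturated clopen sets are clopen
  have himg_clopen : ∀ (W : Set X), IsClopen W → (∀ (k : G) ρ, ρ ∈ W → k • ρ ∈ W) →
      IsClopen (q '' W) := by
    intro W hW hsat
    have hsat' : ∀ (k : G) ρ, ρ ∈ Wᶜ → k • ρ ∈ Wᶜ := by
      intro k ρ hρ hmem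
      exact hρ (by simpa using hsat k⁻¹ _ hmem)
    constructor
    · have heq : q '' W = (q '' Wᶜ)ᶜ := by
        ext y
        obtain ⟨a, rfl⟩ := Quot.exists_rep y
        have h1 := hmemiff W hsat a
        have h2 := hmemiff Wᶜ hsat' a
        constructor
        · intro h hmem
          exact (h2.mp hmem) (h1.mp h)
        · intro h
          exact h1.mpr (by by_contra hcon; exact h (h2.mpr hcon))
      rw [heq]
      exact (hqo _ hW.compl.isOpen).isClosed_compl
    · exact hqo _ hW.isOpen
  apply Set.Subset.antisymm
  · exact hqc.image_connectedComponent_subset x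
  · intro y hy
    obtain ⟨ρ₀, hρ₀⟩ := Quot.exists_rep y
    have hρ₀' : q ρ₀ = y := hρ₀
    -- the family of saturated clopen sets containing x
    set S : Set (Set X) :=
      {W : Set X | IsClopen W ∧ x ∈ W ∧ ∀ (k : G) ρ, ρ ∈ W → k • ρ ∈ W} with hSdef
    have huniv : (univ : Set X) ∈ S := ⟨isClopen_univ, mem_univ _, fun _ _ _ => mem_univ _⟩
    have horb_compact : IsCompact (orbit G ρ₀ : Set X) := by
      have : (orbit G ρ₀ : Set X) = Set.range fun k : G => k • ρ₀ := rfl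
      rw [this]
      exact isCompact_range (hc.comp (continuous_id.prodMk continuous_const))
    have hyW : ∀ W ∈ S, ∃ ρ ∈ W, q ρ = q ρ₀ := by
      intro W hW
      have h1 : q ρ₀ ∈ q '' W := by
        apply (himg_clopen W hW.1 hW.2.2).connectedComponent_subset ⟨x, hW.2.1, rfl⟩
        rw [hρ₀']; exact hy
      obtain ⟨ρ, hρ, h⟩ := h1
      exact ⟨ρ, hρ, h⟩
    haveI : Nonempty S := ⟨⟨univ, huniv⟩⟩
    have key : (⋂ W : S, (orbit G ρ₀ ∩ (W : Set X))).Nonempty := by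
      apply IsCompact.nonempty_iInter_of_directed_nonempty_isCompact_isClosed
      · rintro ⟨W₁, h₁⟩ ⟨W₂, h₂⟩
        refine ⟨⟨W₁ ∩ W₂, h₁.1.inter h₂.1, ⟨h₁.2.1, h₂.2.1⟩,
          fun k ρ hρ => ⟨h₁.2.2 k ρ hρ.1, h₂.2.2 k ρ hρ.2⟩⟩, ?_, ?_⟩
        · exact inter_subset_inter_right _ inter_subset_left
        · exact inter_subset_inter_right _ inter_subset_right
      · rintro ⟨W, hW⟩
        obtain ⟨ρ, hρW, hρq⟩ := hyW W hW
        obtain ⟨k, hk⟩ := (hqeq ρ ρ₀).mp hρq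
        exact ⟨ρ, ⟨⟨k, hk⟩, hρW⟩⟩
      · rintro ⟨W, hW⟩
        exact horb_compact.inter_right hW.1.isClosed
      · rintro ⟨W, hW⟩
        exact horb_compact.isClosed.inter hW.1.isClosed
    obtain ⟨ρ, hρ⟩ := key
    have hρorb : ρ ∈ orbit G ρ₀ := (Set.mem_iInter.mp hρ ⟨univ, huniv⟩).1
    have hρS : ∀ W ∈ S, ρ ∈ W := fun W hW => (Set.mem_iInter.mp hρ ⟨W, hW⟩).2
    have hρC : ρ ∈ connectedComponent x := by
      rw [connectedComponent_eq_iInter_isClopen]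
      refine Set.mem_iInter.mpr ?_
      rintro ⟨Z, hZ, hxZ⟩
      -- build a saturated clopen subset of Z containing x
      set Sat : Set X := (fun p : G × X => p.1 • p.2) '' (univ ×ˢ Zᶜ) with hSatdef
      have hSatmem : ∀ a, a ∈ Sat ↔ ∃ k : G, k • a ∈ Zᶜ := by
        intro a
        constructor
        · rintro ⟨⟨k, b⟩, ⟨-, hb⟩, rfl⟩
          exact ⟨k⁻¹, by simpa using hb⟩
        · rintro ⟨k, hk⟩
          exact ⟨⟨k⁻¹, k • a⟩, ⟨mem_univ _, hk⟩, by simp⟩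
      have hSatopen : IsOpen Sat := by
        have heq : Sat = ⋃ k : G, (fun a => k • a) ⁻¹' Zᶜ := by
          ext a
          simp only [hSatmem a, Set.mem_iUnion, Set.mem_preimage]
        rw [heq]
        exact isOpen_iUnion fun k => hZ.compl.isOpen.preimage (continuous_const_smul k)
      have hSatclosed : IsClosed Sat := by
        have : IsCompact Sat :=
          ((isCompact_univ).prod (hZ.compl.isClosed.isCompact)).image hc
        exact this.isClosed
      have hWS : Z ∩ Satᶜ ∈ S := by
        refine ⟨hZ.inter ⟨hSatopen.isClosed_compl, hSatclosed.isOpen_compl⟩, ⟨hxZ, ?_⟩, ?_⟩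
        · intro hmem
          obtain ⟨k, hk⟩ := (hSatmem x).mp hmem
          rw [hx k] at hk
          exact hk hxZ
        · intro k ρ' hρ'
          constructor
          · by_contra hcon
            exact hρ'.2 ((hSatmem ρ').mpr ⟨k, hcon⟩)
          · intro hmem
            obtain ⟨k', hk'⟩ := (hSatmem (k • ρ')).mp hmem
            rw [smul_smul] at hk'
            exact hρ'.2 ((hSatmem ρ').mpr ⟨k' * k, hk'⟩)
      exact (hρS _ hWS).1
    refine ⟨ρ, hρC, ?_⟩
    obtain ⟨k, hk⟩ := hρorb
    rw [← hρ₀']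
    exact (hqeq ρ ρ₀).mpr ⟨k, hk⟩

set_option synthInstance.maxHeartbeats 1000000 in
set_option maxHeartbeats 1000000 in
/-- Let `Γ` be a finitely generated nilpotent group and `K` a closed subgroup of `U(n)`, with
`K` acting on `Hom(Γ,K)` by conjugation and `q : Hom(Γ,K) → Hom(Γ,K)/K` the quotient map to
the orbit space (with the quotient topology). Then the image under `q` of the connected
component of the trivial homomorphism equals the connected component of `q(𝟙)`. -/
theorem image_of_component_of_trivial_eq_component_in_quotient
    (n : ℕ) (K : Subgroup (Matrix.unitaryGroup (Fin n) ℂ))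
    (hK : IsClosed (K : Set (Matrix.unitaryGroup (Fin n) ℂ)))
    (Γ : Type*) [Group Γ] (hfg : Group.FG Γ) (hnil : Group.IsNilpotent Γ) :
    Quotient.mk (MulAction.orbitRel ↥K (Γ →* ↥K)) '' connectedComponent (1 : Γ →* ↥K) =
      connectedComponent (Quotient.mk (MulAction.orbitRel ↥K (Γ →* ↥K)) 1) := by
  classical
  -- the unitary group is closed in the matrix space
  have hUclosed : IsClosed ((Matrix.unitaryGroup (Fin n) ℂ : Submonoid _) :
      Set (Matrix (Fin n) (Fin n) ℂ)) := by
    have heq : ((Matrix.unitaryGroup (Fin n) ℂ : Submonoid _) : Set (Matrix (Fin n) (Fin n) ℂ))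
        = (fun A : Matrix (Fin n) (Fin n) ℂ => A * star A) ⁻¹' {1} := by
      ext A
      simp [Matrix.mem_unitaryGroup_iff]
    rw [heq]
    exact isClosed_singleton.preimage (continuous_id.mul continuous_star)
  -- the unitary group is compact
  have hUcompact : IsCompact ((Matrix.unitaryGroup (Fin n) ℂ : Submonoid _) :
      Set (Matrix (Fin n) (Fin n) ℂ)) := by
    have hsub : ((Matrix.unitaryGroup (Fin n) ℂ : Submonoid _) : Set (Matrix (Fin n) (Fin n) ℂ))
        ⊆ Set.univ.pi fun _ : Fin n => Set.univ.pi fun _ : Fin n => Metric.closedBall (0 : ℂ) 1 := by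
      intro A hA
      refine Set.mem_univ_pi.mpr fun i => Set.mem_univ_pi.mpr fun j => ?_
      simpa [mem_closedBall_zero_iff] using entry_norm_bound_of_unitary hA i j
    exact IsCompact.of_isClosed_subset
      (isCompact_univ_pi fun _ => isCompact_univ_pi fun _ => isCompact_closedBall _ _)
      hUclosed hsub
  haveI hUc : CompactSpace (Matrix.unitaryGroup (Fin n) ℂ) :=
    isCompact_iff_compactSpace.mp hUcompact
  haveI hKc : CompactSpace ↥K := isCompact_iff_compactSpace.mp (hK.isCompact)
  -- the embedding of `K` into matrices and continuity of group operations of `K`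
  set ι : ↥K → Matrix (Fin n) (Fin n) ℂ :=
    fun k => ((k : Matrix.unitaryGroup (Fin n) ℂ) : Matrix (Fin n) (Fin n) ℂ) with hι
  have hind : IsInducing ι := IsInducing.subtypeVal.comp IsInducing.subtypeVal
  have hιc : Continuous ι := continuous_subtype_val.comp continuous_subtype_val
  have hmul : Continuous fun p : ↥K × ↥K => p.1 * p.2 := by
    rw [hind.continuous_iff]
    show Continuous fun p : ↥K × ↥K => ι p.1 * ι p.2
    exact (hιc.comp continuous_fst).mul (hιc.comp continuous_snd)
  have hinv : Continuous fun k : ↥K => k⁻¹ := by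
    rw [hind.continuous_iff]
    show Continuous fun k : ↥K => star (ι k)
    exact continuous_star.comp hιc
  -- the representation space `Hom(Γ,K)`
  have hindX : IsInducing (fun ρ : Γ →* ↥K => (ρ : Γ → ↥K)) := ⟨rfl⟩
  have hembX : IsEmbedding (fun ρ : Γ →* ↥K => (ρ : Γ → ↥K)) := ⟨hindX, DFunLike.coe_injective⟩
  haveI hT2X : T2Space (Γ →* ↥K) := hembX.t2Space
  have heval : ∀ γ : Γ, Continuous fun ρ : Γ →* ↥K => ρ γ :=
    fun γ => (continuous_apply γ).comp hindX.continuous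
  -- joint continuity of the conjugation action
  have hc : Continuous fun p : ↥K × (Γ →* ↥K) => p.1 • p.2 := by
    rw [hindX.continuous_iff]
    apply continuous_pi
    intro γ
    show Continuous fun p : ↥K × (Γ →* ↥K) => p.1 * p.2 γ * p.1⁻¹
    have h1 : Continuous fun p : ↥K × (Γ →* ↥K) => p.1 * p.2 γ :=
      hmul.comp (continuous_fst.prodMk ((heval γ).comp continuous_snd))
    exact hmul.comp (h1.prodMk (hinv.comp continuous_fst))
  -- compactness of the representation space
  have hrange : Set.range (fun ρ : Γ →* ↥K => (ρ : Γ → ↥K)) =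
      {f : Γ → ↥K | f 1 = 1 ∧ ∀ a b : Γ, f (a * b) = f a * f b} := by
    ext f
    constructor
    · rintro ⟨ρ, rfl⟩
      exact ⟨ρ.map_one, ρ.map_mul⟩
    · rintro ⟨h1, hm⟩
      exact ⟨⟨⟨f, h1⟩, hm⟩, rfl⟩
  have hclosed_range : IsClosed (Set.range (fun ρ : Γ →* ↥K => (ρ : Γ → ↥K))) := by
    rw [hrange]
    have h2 : {f : Γ → ↥K | f 1 = 1 ∧ ∀ a b : Γ, f (a * b) = f a * f b}
        = {f : Γ → ↥K | f 1 = 1} ∩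
          ⋂ (a : Γ), ⋂ (b : Γ), {f : Γ → ↥K | f (a * b) = f a * f b} := by
      ext f; simp [Set.mem_iInter]
    rw [h2]
    refine (isClosed_eq (continuous_apply 1) continuous_const).inter ?_
    refine isClosed_iInter fun a => isClosed_iInter fun b => ?_
    have hpair : Continuous fun f : Γ → ↥K => ((f a, f b) : ↥K × ↥K) :=
      (continuous_apply a).prodMk (continuous_apply b)
    have : Continuous fun f : Γ → ↥K => f a * f b := hmul.comp hpair
    exact isClosed_eq (continuous_apply _) this
  haveI hXc : CompactSpace (Γ →* ↥K) := by
    constructor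
    rw [hindX.isCompact_iff, Set.image_univ]
    exact hclosed_range.isCompact
  -- the trivial homomorphism is a fixed point of the conjugation action
  have hx : ∀ k : ↥K, k • (1 : Γ →* ↥K) = 1 := by
    intro k
    refine MonoidHom.ext fun γ => ?_
    show k * (1 : Γ →* ↥K) γ * k⁻¹ = (1 : Γ →* ↥K) γ
    simp
  exact aux_image_component hc (1 : Γ →* ↥K) hx
end

section
/- Let Γ be a finitely generated nilpotent group and let K be a closed subgroup of the unitary group U(n). Let K act on the representation space Hom(Γ,K) by conjugation and give the orbit space Hom(Γ,K)/K the quotient topology. Then Hom(Γ,K) is a connected topological space if and only if Hom(Γ,K)/K is a connected topological space. -/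
open Set Topology

theorem Matrix.isCompact_unitaryGroup {𝕜 n : Type*} [RCLike 𝕜] [Fintype n] [DecidableEq n] :
    IsCompact (Matrix.unitaryGroup n 𝕜 : Set (Matrix n n 𝕜)) :=
  (isCompact_univ_pi fun _ => isCompact_univ_pi fun _ => isCompact_closedBall (0 : 𝕜) 1)
    |>.of_isClosed_subset (isClosed_unitary (R := Matrix n n 𝕜)) fun _ hU =>
      mem_univ_pi.mpr fun i => mem_univ_pi.mpr fun j =>
        mem_closedBall_zero_iff.mpr (entry_norm_bound_of_unitary hU i j)

instance Matrix.compactSpace_unitaryGroup {𝕜 n : Type*} [RCLike 𝕜] [Fintype n]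
    [DecidableEq n] : CompactSpace (Matrix.unitaryGroup n 𝕜) :=
  isCompact_iff_compactSpace.mp Matrix.isCompact_unitaryGroup

namespace MulAction

variable {G X : Type*} [Group G] [MulAction G X]

theorem preimage_image_quotient_mk_orbitRel {V : Set X} (hV : ∀ g : G, ∀ x ∈ V, g • x ∈ V) :
    Quotient.mk (orbitRel G X) ⁻¹' (Quotient.mk (orbitRel G X) '' V) = V := by
  refine Subset.antisymm (fun x ⟨v, hv, hvx⟩ => ?_) (subset_preimage_image _ _)
  obtain ⟨g, rfl⟩ := Quotient.exact hvx.symm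
  exact hV g v hv

variable [TopologicalSpace X]

theorem isClosed_setOf_forall_smul_mem [ContinuousConstSMul G X] {U : Set X}
    (hU : IsClosed U) : IsClosed {x | ∀ g : G, g • x ∈ U} := by
  rw [ofPred_forall]
  exact isClosed_iInter fun g : G => hU.preimage (continuous_const_smul g)

variable [TopologicalSpace G]

theorem isOpen_setOf_forall_smul_mem [CompactSpace G] [ContinuousSMul G X] {U : Set X}
    (hU : IsOpen U) : IsOpen {x | ∀ g : G, g • x ∈ U} := by
  refine isOpen_iff_eventually.mpr fun x hx => ?_
  have hnear : ∀ᶠ y in 𝓝 x, ∀ g ∈ (univ : Set G), g • y ∈ U :=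
    isCompact_univ.eventually_forall_of_forall_eventually fun g _ =>
      (continuous_snd.smul continuous_fst).continuousAt.preimage_mem_nhds (hU.mem_nhds (hx g))
  exact hnear.mono fun y hy g => hy g (mem_univ g)

theorem eq_univ_of_isClopen_of_smul_eq_self_mem [CompactSpace G] [ContinuousSMul G X]
    [PreconnectedSpace (Quotient (orbitRel G X))] {x₀ : X} (hx₀ : ∀ g : G, g • x₀ = x₀)
    {U : Set X} (hU : IsClopen U) (hx₀U : x₀ ∈ U) : U = univ := by
  set V := {x | ∀ g : G, g • x ∈ U}
  have hV : IsClopen V := ⟨isClosed_setOf_forall_smul_mem hU.1, isOpen_setOf_forall_smul_mem hU.2⟩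
  have hVinv : ∀ g : G, ∀ x ∈ V, g • x ∈ V := fun g x hx h => smul_smul h g x ▸ hx (h * g)
  have hVsat := preimage_image_quotient_mk_orbitRel hVinv
  have hW : Quotient.mk (orbitRel G X) '' V = univ := by
    refine IsClopen.eq_univ ?_ ⟨_, x₀, fun g => (hx₀ g).symm ▸ hx₀U, rfl⟩
    have hpre : IsClopen (Quotient.mk (orbitRel G X) ⁻¹' (Quotient.mk (orbitRel G X) '' V)) :=
      hVsat.symm ▸ hV
    exact isQuotientMap_quotient_mk'.isClopen_preimage.mp hpre
  refine eq_univ_of_forall fun x => ?_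
  have hxV : x ∈ V := hVsat ▸ hW ▸ mem_univ _
  simpa using hxV 1

theorem connectedSpace_iff_connectedSpace_quotient_orbitRel [CompactSpace G]
    [ContinuousSMul G X] {x₀ : X} (hx₀ : ∀ g : G, g • x₀ = x₀) :
    ConnectedSpace X ↔ ConnectedSpace (Quotient (orbitRel G X)) := by
  refine ⟨fun _ => Quotient.mk_surjective.connectedSpace continuous_quotient_mk', fun _ => ?_⟩
  refine connectedSpace_iff_clopen.mpr ⟨⟨x₀⟩, fun U hU => ?_⟩
  by_cases hx₀U : x₀ ∈ U
  · exact Or.inr (eq_univ_of_isClopen_of_smul_eq_self_mem hx₀ hU hx₀U)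
  · exact Or.inl (compl_univ_iff.mp (eq_univ_of_isClopen_of_smul_eq_self_mem hx₀ hU.compl hx₀U))

end MulAction

section ConjAction

variable {Γ G : Type*} [Group Γ] [Group G]

theorem conjAction_smul_one (k : G) : k • (1 : Γ →* G) = 1 :=
  MonoidHom.ext fun _ => show k * 1 * k⁻¹ = 1 by group

instance [TopologicalSpace G] [ContinuousMul G] [ContinuousInv G] :
    ContinuousSMul G (Γ →* G) where
  continuous_smul := continuous_induced_rng.mpr <| continuous_pi fun γ => by
    have hγ : Continuous fun ρ : Γ →* G => ρ γ := (continuous_apply γ).comp continuous_induced_dom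
    show Continuous fun p : G × (Γ →* G) => p.1 * p.2 γ * p.1⁻¹
    exact (continuous_fst.mul (hγ.comp continuous_snd)).mul continuous_fst.inv

end ConjAction

theorem rep_space_connected_iff_quotient_connected_general
    (n : ℕ) (K : Subgroup (Matrix.unitaryGroup (Fin n) ℂ))
    (hK : IsClosed (K : Set (Matrix.unitaryGroup (Fin n) ℂ)))
    (Γ : Type*) [Group Γ] :
    ConnectedSpace (Γ →* ↥K) ↔
      ConnectedSpace (Quotient (MulAction.orbitRel ↥K (Γ →* ↥K))) :=
  haveI : CompactSpace K := isCompact_iff_compactSpace.mp hK.isCompact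
  MulAction.connectedSpace_iff_connectedSpace_quotient_orbitRel conjAction_smul_one

/-- Let `Γ` be a finitely generated nilpotent group and `K` a closed subgroup of `U(n)`, with
`K` acting on `Hom(Γ,K)` by conjugation. Then `Hom(Γ,K)` is connected if and only if the
orbit space `Hom(Γ,K)/K` (with the quotient topology) is connected. -/
theorem rep_space_connected_iff_quotient_connected
    (n : ℕ) (K : Subgroup (Matrix.unitaryGroup (Fin n) ℂ))
    (hK : IsClosed (K : Set (Matrix.unitaryGroup (Fin n) ℂ)))
    (Γ : Type*) [Group Γ] (hfg : Group.FG Γ) (hnil : Group.IsNilpotent Γ) :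
    ConnectedSpace (Γ →* ↥K) ↔
      ConnectedSpace (Quotient (MulAction.orbitRel ↥K (Γ →* ↥K))) :=
  rep_space_connected_iff_quotient_connected_general n K hK Γ
end

section
/- For every n ≥ 2, the representation space Hom(H₃(ℤ), U(n)) of the integer Heisenberg group in the unitary group U(n) is a disconnected topological space (it is not connected). -/
/-- The integer Heisenberg group `H₃(ℤ)`: triples `(a,b,c)` of integers with multiplication
`(a,b,c)·(a',b',c') = (a+a', b+b', c+c'+a·b')`, i.e. upper-triangular 3×3 integer matrices
with ones on the diagonal. -/
@[ext]
structure Heisenberg where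
  a : ℤ
  b : ℤ
  c : ℤ

namespace Heisenberg

instance : Mul Heisenberg := ⟨fun x y => ⟨x.a + y.a, x.b + y.b, x.c + y.c + x.a * y.b⟩⟩
instance : One Heisenberg := ⟨⟨0, 0, 0⟩⟩
instance : Inv Heisenberg := ⟨fun x => ⟨-x.a, -x.b, x.a * x.b - x.c⟩⟩

@[simp] lemma mul_a (x y : Heisenberg) : (x * y).a = x.a + y.a := rfl
@[simp] lemma mul_b (x y : Heisenberg) : (x * y).b = x.b + y.b := rfl
@[simp] lemma mul_c (x y : Heisenberg) : (x * y).c = x.c + y.c + x.a * y.b := rfl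
@[simp] lemma one_a : (1 : Heisenberg).a = 0 := rfl
@[simp] lemma one_b : (1 : Heisenberg).b = 0 := rfl
@[simp] lemma one_c : (1 : Heisenberg).c = 0 := rfl
@[simp] lemma inv_a (x : Heisenberg) : x⁻¹.a = -x.a := rfl
@[simp] lemma inv_b (x : Heisenberg) : x⁻¹.b = -x.b := rfl
@[simp] lemma inv_c (x : Heisenberg) : x⁻¹.c = x.a * x.b - x.c := rfl

instance : Group Heisenberg where
  mul_assoc x y z := by ext <;> simp <;> ring
  one_mul x := by ext <;> simp
  mul_one x := by ext <;> simp
  inv_mul_cancel x := by ext <;> simp [mul_comm]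

end Heisenberg

/-!
In a finite-dimensional representation `ρ` of the Heisenberg group, `ρ X` and `ρ Y` commute with
`ρ Z` and so preserve each eigenspace `E` of `ρ Z`; if `μ` is its eigenvalue, taking determinants
on `E` in `ρ X * ρ Y = ρ Y * ρ X * ρ Z` gives `μ ^ dim E = 1`. So the trace of `ρ Z` is a sum of
`n` roots of unity of order dividing `n!`: it takes finitely many values and depends continuously
on `ρ`, hence is constant on a connected representation space. But the trivial representation
gives `n`, while a Pauli-type representation on two coordinates, where `Z` acts by `-1`, gives
`n - 4`.
-/

namespace Heisenberg

def X : Heisenberg := ⟨1, 0, 0⟩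
def Y : Heisenberg := ⟨0, 1, 0⟩
def Z : Heisenberg := ⟨0, 0, 1⟩

lemma X_mul_Y : X * Y = Y * X * Z := by ext <;> rfl

lemma commute_Z (g : Heisenberg) : Commute Z g := by
  ext <;> simp [Z, add_comm]

end Heisenberg

section CentralCommutator

variable {G : Type*} [Group G] {x y z : G}

lemma zpow_mul_zpow_of_central_commutator (hzx : Commute z x) (hzy : Commute z y)
    (hxy : x * y = y * x * z) (a b : ℤ) : x ^ a * y ^ b = y ^ b * x ^ a * z ^ (a * b) := by
  have hx : SemiconjBy y⁻¹ x (x * z) := by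
    rw [SemiconjBy, eq_mul_inv_iff_mul_eq, mul_assoc, hxy]
    group
  have hxa : SemiconjBy (x ^ a) y (y * z ^ a) := by
    have hx_a := (hx.zpow_right a).eq
    rw [hzx.symm.mul_zpow] at hx_a
    calc x ^ a * y = y * (y⁻¹ * x ^ a) * y := by group
      _ = y * (x ^ a * z ^ a) := by rw [hx_a]; group
      _ = y * z ^ a * x ^ a := by rw [← (hzx.zpow_zpow a a).eq, mul_assoc]
  rw [(hxa.zpow_right b).eq, (hzy.symm.zpow_right a).mul_zpow, ← zpow_mul, mul_comm a b,
    mul_assoc, mul_assoc, (hzx.zpow_zpow _ a).eq]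

/-- Built on the normal form `(a, b, c) = Y ^ b * X ^ a * Z ^ c`. -/
def Heisenberg.lift (hzx : Commute z x) (hzy : Commute z y) (hxy : x * y = y * x * z) :
    Heisenberg →* G where
  toFun g := y ^ g.b * x ^ g.a * z ^ g.c
  map_one' := by simp
  map_mul' g h := by
    have hz : z ^ g.c * (y ^ h.b * x ^ h.a) = y ^ h.b * x ^ h.a * z ^ g.c :=
      ((hzy.zpow_zpow _ _).mul_right (hzx.zpow_zpow _ _)).eq
    symm
    calc y ^ g.b * x ^ g.a * z ^ g.c * (y ^ h.b * x ^ h.a * z ^ h.c)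
        = y ^ g.b * x ^ g.a * (z ^ g.c * (y ^ h.b * x ^ h.a)) * z ^ h.c := by group
      _ = y ^ g.b * (x ^ g.a * y ^ h.b) * x ^ h.a * (z ^ g.c * z ^ h.c) := by rw [hz]; group
      _ = y ^ g.b * y ^ h.b * x ^ g.a * (z ^ (g.a * h.b) * x ^ h.a) * (z ^ g.c * z ^ h.c) := by
          rw [zpow_mul_zpow_of_central_commutator hzx hzy hxy]; group
      _ = y ^ (g * h).b * x ^ (g * h).a * z ^ (g * h).c := by
          rw [(hzx.zpow_zpow _ _).eq, Heisenberg.mul_a, Heisenberg.mul_b, Heisenberg.mul_c]; group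

@[simp]
lemma Heisenberg.lift_Z (hzx : Commute z x) (hzy : Commute z y) (hxy : x * y = y * x * z) :
    Heisenberg.lift hzx hzy hxy Heisenberg.Z = z := by
  simp [Heisenberg.lift, Heisenberg.Z]

end CentralCommutator

open Matrix Module Set Polynomial Equiv

noncomputable def sumsOfRootsOfUnity (K : Type*) [Field K] [DecidableEq K] (N d : ℕ) : Finset K :=
  ((nthRootsFinset N (1 : K)).sym d).image fun s : Sym K d ↦ (s : Multiset K).sum

namespace Module.End

variable {K V : Type*} [Field K] [AddCommGroup V] [Module K V] [FiniteDimensional K V]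

lemma det_restrict_ne_zero_s14 {u : End K V} (hu : IsUnit u) {p : Submodule K V}
    (hp : MapsTo u p p) : (u.restrict hp).det ≠ 0 := by
  rw [Ne, LinearMap.det_eq_zero_iff_ker_ne_bot, not_not, LinearMap.ker_eq_bot]
  exact fun a b hab ↦ Subtype.ext <| ((isUnit_iff u).mp hu).injective congr($hab)

lemma pow_finrank_eigenspace_eq_one_s14 {f u v : End K V} (hu : IsUnit u) (hv : IsUnit v)
    (hfu : Commute f u) (hfv : Commute f v) (huv : u * v = v * u * f) (μ : K) :
    μ ^ finrank K (f.eigenspace μ) = 1 := by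
  have hpu := mapsTo_genEigenspace_of_comm hfu μ 1
  have hpv := mapsTo_genEigenspace_of_comm hfv μ 1
  have hpf := mapsTo_genEigenspace_of_comm (Commute.refl f) μ 1
  have hf : f.restrict hpf = μ • 1 :=
    LinearMap.ext fun x ↦ Subtype.ext (mem_eigenspace_iff.mp x.2)
  have hrel : u.restrict hpu * v.restrict hpv =
      v.restrict hpv * u.restrict hpu * f.restrict hpf :=
    LinearMap.ext fun x ↦ Subtype.ext (LinearMap.congr_fun huv x)
  have hdet := congrArg LinearMap.det hrel
  rw [hf, map_mul, map_mul, map_mul, LinearMap.det_smul] at hdet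
  simp only [map_one, mul_one] at hdet
  have hne := mul_ne_zero (det_restrict_ne_zero_s14 hu hpu) (det_restrict_ne_zero_s14 hv hpv)
  exact (mul_eq_left₀ hne).mp (by linear_combination hdet.symm)

lemma pow_factorial_finrank_eq_one {f u v : End K V} (hu : IsUnit u) (hv : IsUnit v)
    (hfu : Commute f u) (hfv : Commute f v) (huv : u * v = v * u * f) {μ : K}
    (hμ : f.HasEigenvalue μ) : μ ^ (finrank K V).factorial = 1 := by
  have hpos : 0 < finrank K (f.eigenspace μ) :=
    Nat.pos_of_ne_zero fun h ↦ hasEigenvalue_iff.mp hμ (Submodule.finrank_eq_zero.mp h)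
  obtain ⟨k, hk⟩ := Nat.dvd_factorial hpos (Submodule.finrank_le _)
  rw [hk, pow_mul, pow_finrank_eigenspace_eq_one_s14 hu hv hfu hfv huv, one_pow]

lemma trace_mem_sumsOfRootsOfUnity [IsAlgClosed K] [DecidableEq K] {f : End K V} {N : ℕ}
    (hN : 0 < N) (hf : ∀ μ, f.HasEigenvalue μ → μ ^ N = 1) :
    LinearMap.trace K V f ∈ sumsOfRootsOfUnity K N (finrank K V) := by
  have hsplits := IsAlgClosed.splits f.charpoly
  have hcard : f.charpoly.roots.card = finrank K V := by
    rw [← LinearMap.charpoly_natDegree f]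
    exact splits_iff_card_roots.mp hsplits
  rw [trace_eq_sum_roots_charpoly_of_splits hsplits]
  refine Finset.mem_image.mpr ⟨⟨_, hcard⟩, Finset.mem_sym_iff.mpr fun μ hμ ↦ ?_, rfl⟩
  exact (mem_nthRootsFinset hN 1).mpr
    (hf μ ((hasEigenvalue_iff_isRoot_charpoly f μ).mpr (isRoot_of_mem_roots hμ)))

end Module.End

namespace Heisenberg

variable {K : Type*} [Field K]

lemma pow_factorial_eq_one_of_hasEigenvalue {V : Type*} [AddCommGroup V] [Module K V]
    [FiniteDimensional K V] (ρ : Heisenberg →* End K V) {μ : K} (hμ : (ρ Z).HasEigenvalue μ) :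
    μ ^ (finrank K V).factorial = 1 :=
  Module.End.pow_factorial_finrank_eq_one ((Group.isUnit X).map ρ) ((Group.isUnit Y).map ρ)
    ((commute_Z X).map ρ) ((commute_Z Y).map ρ)
    (by rw [← map_mul, ← map_mul, ← map_mul, X_mul_Y]) hμ

lemma trace_mem_sumsOfRootsOfUnity [IsAlgClosed K] [DecidableEq K] {ι : Type*} [Fintype ι]
    [DecidableEq ι] (ρ : Heisenberg →* Matrix ι ι K) :
    trace (ρ Z) ∈ sumsOfRootsOfUnity K (Fintype.card ι).factorial (Fintype.card ι) := by
  let ρ' : Heisenberg →* End K (ι → K) :=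
    (toLinAlgEquiv' (R := K) (n := ι) : Matrix ι ι K →* End K (ι → K)).comp ρ
  have h := Module.End.trace_mem_sumsOfRootsOfUnity (f := ρ' Z) (Nat.factorial_pos _)
    fun μ hμ ↦ pow_factorial_eq_one_of_hasEigenvalue ρ' hμ
  rw [finrank_fintype_fun_eq_card] at h
  rwa [← trace_toLin'_eq]

end Heisenberg

section UnitaryMatrices

variable {ι R : Type*} [Fintype ι] [DecidableEq ι]

lemma Matrix.permMatrix_mul_diagonal [Semiring R] (σ : Perm ι) (d : ι → R) :
    σ.permMatrix R * diagonal d = diagonal (d ∘ σ) * σ.permMatrix R := by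
  ext a b
  simp only [mul_diagonal, diagonal_mul, Function.comp_apply]
  by_cases h : σ a = b <;> simp [PEquiv.toMatrix_apply, h]

variable [CommRing R] [StarRing R]

lemma Matrix.permMatrix_mem_unitaryGroup (σ : Perm ι) : σ.permMatrix R ∈ unitaryGroup ι R := by
  rw [mem_unitaryGroup_iff, star_eq_conjTranspose, conjTranspose_permMatrix, ← permMatrix_mul,
    inv_mul_cancel, permMatrix_one]

lemma Matrix.diagonal_mem_unitaryGroup {d : ι → R} (hd : ∀ i, d i ∈ unitary R) :
    diagonal d ∈ unitaryGroup ι R := by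
  rw [mem_unitaryGroup_iff, star_eq_conjTranspose, diagonal_conjTranspose, diagonal_mul_diagonal,
    ← diagonal_one]
  exact congrArg diagonal (funext fun i ↦ Unitary.mul_star_self_of_mem (hd i))

lemma exists_unitaryGroup_central_commutator {i j : ι} (hij : i ≠ j) :
    ∃ x y z : unitaryGroup ι R, Commute z x ∧ Commute z y ∧ x * y = y * x * z ∧
      trace (z : Matrix ι ι R) = Fintype.card ι - 4 := by
  let σ := swap i j
  let dy : ι → R := fun k ↦ if k = j then -1 else 1
  let dz : ι → R := fun k ↦ if k = i ∨ k = j then -1 else 1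
  have hdy_unitary : ∀ k, dy k ∈ unitary R := by
    intro k; simp only [dy]; split_ifs <;> simp [Unitary.mem_iff]
  have hdz_unitary : ∀ k, dz k ∈ unitary R := by
    intro k; simp only [dz]; split_ifs <;> simp [Unitary.mem_iff]
  have hdz : dz ∘ σ = dz := by
    ext k; simp only [dz, σ, Function.comp_apply, swap_apply_def]; split_ifs <;> simp_all
  have hdy : dy ∘ σ = dy * (dz ∘ σ) := by
    ext k; simp only [dy, dz, σ, Pi.mul_apply, Function.comp_apply, swap_apply_def]
    split_ifs <;> simp_all
  refine ⟨⟨_, permMatrix_mem_unitaryGroup σ⟩, ⟨_, diagonal_mem_unitaryGroup hdy_unitary⟩,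
    ⟨_, diagonal_mem_unitaryGroup hdz_unitary⟩, ?_, ?_, ?_, ?_⟩
  · refine Subtype.ext ?_
    simp only [Submonoid.coe_mul]
    rw [permMatrix_mul_diagonal, hdz]
  · exact Subtype.ext (commute_diagonal dz dy)
  · refine Subtype.ext ?_
    simp only [Submonoid.coe_mul]
    rw [permMatrix_mul_diagonal, mul_assoc, permMatrix_mul_diagonal, ← mul_assoc,
      diagonal_mul_diagonal, hdy]
    rfl
  · have hdz' : dz = fun k ↦ 1 - 2 * (Pi.single i 1 k + Pi.single j 1 k) := by
      ext k; simp only [dz, Pi.single_apply]; split_ifs <;> simp_all <;> norm_num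
    simp only [trace_diagonal, hdz', Finset.sum_sub_distrib, ← Finset.mul_sum,
      Finset.sum_add_distrib, Finset.sum_pi_single', Finset.mem_univ, if_true, Finset.sum_const,
      Finset.card_univ, nsmul_eq_mul, mul_one]
    ring

end UnitaryMatrices

/-- For every `n ≥ 2`, the representation space `Hom(H₃(ℤ), U(n))` of the integer Heisenberg
group in the unitary group `U(n)` is disconnected. -/
theorem heisenberg_rep_space_disconnected_unitary (n : ℕ) (hn : 2 ≤ n) :
    ¬ ConnectedSpace (Heisenberg →* Matrix.unitaryGroup (Fin n) ℂ) := by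
  intro hconn
  let trZ : (Heisenberg →* unitaryGroup (Fin n) ℂ) → ℂ :=
    fun ρ ↦ trace (ρ Heisenberg.Z : Matrix (Fin n) (Fin n) ℂ)
  have hcont : Continuous trZ :=
    (continuous_subtype_val.comp ((continuous_apply _).comp continuous_induced_dom)).matrix_trace
  have hfinite : MapsTo trZ univ (sumsOfRootsOfUnity ℂ n.factorial n) := fun ρ _ ↦ by
    simpa using Heisenberg.trace_mem_sumsOfRootsOfUnity ((unitaryGroup (Fin n) ℂ).subtype.comp ρ)
  obtain ⟨x, y, z, hzx, hzy, hxy, htr⟩ :=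
    exists_unitaryGroup_central_commutator (R := ℂ) (i := (⟨0, by omega⟩ : Fin n))
      (j := ⟨1, by omega⟩) (by simp)
  have h := isPreconnected_univ.constant_of_mapsTo (Finset.finite_toSet _).isDiscrete
    hcont.continuousOn hfinite (mem_univ 1) (mem_univ (Heisenberg.lift hzx hzy hxy))
  simp only [trZ, Heisenberg.lift_Z, htr, MonoidHom.one_apply, OneMemClass.coe_one, trace_one,
    Fintype.card_fin] at h
  exact absurd (sub_eq_self.mp h.symm) (by norm_num)
end

section
/- For every n ≥ 2, the representation space Hom(H₃(ℤ), GL(n,ℂ)) of the integer Heisenberg group in the general linear group GL(n,ℂ) is a disconnected topological space (it is not connected). -/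
/-!
The trace of `ρ z`, for `z` the central generator, is a continuous function of `ρ`. Since
`x ^ k` conjugates `y` to `z ^ k * y`, a common eigenvector of `ρ z` and `ρ y`, with eigenvalues
`μ` and `c`, makes every `c * μ ^ k` an eigenvalue of `ρ y`; finitely many of them exist, so `μ`
is a root of unity. Hence the trace of `ρ z` is an algebraic integer, and on a connected space a
continuous function with countably many values is constant. But it is `n` on the trivial
representation and `n - 4` on the sum of the Pauli representation
`x ↦ σₓ, y ↦ σ_z, z ↦ -1` and a trivial one.
-/

theorem IsConj.spectrum_eq {R A : Type*} [CommSemiring R] [Ring A] [Algebra R A] {a b : A}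
    (h : IsConj a b) : spectrum R a = spectrum R b := by
  obtain ⟨u, hu⟩ := h
  rw [← spectrum.units_conjugate (u := u), hu.eq, Units.mul_inv_cancel_right]

namespace Module.End

variable {K V : Type*} [Field K] [IsAlgClosed K] [AddCommGroup V] [Module K V]
  [FiniteDimensional K V]

theorem exists_hasEigenvector_of_commute {f g : End K V} (hfg : Commute f g) {μ : K}
    (hμ : f.HasEigenvalue μ) : ∃ v c, f.HasEigenvector μ v ∧ g.HasEigenvector c v := by
  have : Nontrivial (f.eigenspace μ) := Submodule.nontrivial_iff_ne_bot.mpr hμ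
  obtain ⟨c, hc⟩ := exists_eigenvalue (g.restrict (mapsTo_genEigenspace_of_comm hfg μ 1))
  obtain ⟨w, hw⟩ := hc.exists_hasEigenvector
  have hw0 : (w : V) ≠ 0 := by simpa using hw.2
  refine ⟨w, c, ⟨w.2, hw0⟩, ⟨mem_eigenspace_iff.2 ?_, hw0⟩⟩
  exact congrArg Subtype.val hw.apply_eq_smul

theorem exists_pow_eq_one_of_hasEigenvalue {a b : End K V} (hab : Commute a b) (hb : IsUnit b)
    (hconj : ∀ k : ℕ, IsConj b (a ^ k * b)) {μ : K} (hμ : a.HasEigenvalue μ) :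
    ∃ k, 0 < k ∧ μ ^ k = 1 := by
  obtain ⟨v, c, hav, hbv⟩ := exists_hasEigenvector_of_commute hab hμ
  have hmem (k : ℕ) : c * μ ^ k ∈ spectrum K b := by
    have hv : (a ^ k * b).HasEigenvector (c * μ ^ k) v :=
      ⟨mem_eigenspace_iff.2 (by simp [hbv.apply_eq_smul, hav.pow_apply, smul_smul]), hbv.2⟩
    exact (hconj k).spectrum_eq (R := K) ▸ (hasEigenvalue_of_hasEigenvector hv).mem_spectrum
  obtain ⟨i, j, hij, heq⟩ := b.finite_spectrum.exists_lt_map_eq_of_forall_mem hmem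
  have hne : c * μ ^ i ≠ 0 := fun h => spectrum.zero_notMem K hb (h ▸ hmem i)
  refine ⟨j - i, by omega, mul_left_cancel₀ hne ?_⟩
  calc c * μ ^ i * μ ^ (j - i) = c * μ ^ j := by
        rw [mul_assoc, ← pow_add, Nat.add_sub_cancel' hij.le]
    _ = c * μ ^ i * 1 := by rw [heq, mul_one]

end Module.End

section Presentation

variable {G : Type*} [Group G] {x y z : G}

theorem semiconjBy_zpow_of_mul_eq (hzx : Commute z x) (hxy : x * y = z * y * x) (a : ℤ) :
    SemiconjBy (x ^ a) y (z ^ a * y) := by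
  have step (m : ℤ) : SemiconjBy x (z ^ m * y) (z ^ (m + 1) * y) := by
    simpa [zpow_add_one, mul_assoc] using
      SemiconjBy.mul_right (hzx.zpow_left m).symm (hxy : SemiconjBy x y (z * y))
  induction a using Int.induction_on with
  | zero => simp
  | succ a ih =>
    rw [zpow_add_one, ← (Commute.self_zpow x _).eq]
    exact (step a).mul_left ih
  | pred a ih =>
    have step' := step (-a - 1)
    rw [sub_add_cancel] at step'
    rw [zpow_sub_one, ← (Commute.self_zpow x _).inv_left.eq]
    exact (SemiconjBy.inv_symm_left_iff.mpr step').mul_left ih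

theorem zpow_mul_zpow_of_mul_eq (hzx : Commute z x) (hzy : Commute z y)
    (hxy : x * y = z * y * x) (a b : ℤ) : x ^ a * y ^ b = z ^ (a * b) * y ^ b * x ^ a := by
  rw [zpow_mul, ← ((hzy.zpow_left a).mul_zpow b)]
  exact (semiconjBy_zpow_of_mul_eq hzx hxy a).zpow_right b

end Presentation

theorem continuous_eval_repSpace {Γ G : Type*} [Group Γ] [Group G] [TopologicalSpace G]
    (γ : Γ) :
    Continuous fun ρ : Γ →* G => ρ γ :=
  (continuous_apply γ).comp continuous_induced_dom

namespace Matrix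

variable {R m k l : Type*} [CommRing R] [Fintype m] [DecidableEq m] [Fintype k] [DecidableEq k]
  [Fintype l] [DecidableEq l]

def fromBlocksOneHom (e : m ⊕ k ≃ l) : Matrix m m R →* Matrix l l R where
  toFun A := reindex e e (fromBlocks A 0 0 1)
  map_one' := by simp
  map_mul' A B := by simp [fromBlocks_multiply, submatrix_mul_equiv]

theorem trace_fromBlocksOneHom (e : m ⊕ k ≃ l) (A : Matrix m m R) :
    (fromBlocksOneHom e A).trace = A.trace + Fintype.card k := by
  simp only [fromBlocksOneHom, MonoidHom.coe_mk, OneHom.coe_mk, trace, diag, reindex_apply,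
    submatrix_apply, e.symm.sum_comp (fun i => fromBlocks A 0 0 1 i i)]
  simp [Fintype.sum_sum_type]

end Matrix

namespace Heisenberg

variable {G : Type*} [Group G]

def lift_s15 (x y z : G) (hzx : Commute z x) (hzy : Commute z y) (hxy : x * y = z * y * x) :
    Heisenberg →* G where
  toFun g := z ^ g.c * y ^ g.b * x ^ g.a
  map_one' := by simp
  map_mul' g h :=
    calc z ^ (g.c + h.c + g.a * h.b) * y ^ (g.b + h.b) * x ^ (g.a + h.a)
        = z ^ g.c * (z ^ (h.c + g.a * h.b) * y ^ g.b) * y ^ h.b * x ^ g.a * x ^ h.a := by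
          simp only [zpow_add, mul_assoc]
      _ = z ^ g.c * y ^ g.b * z ^ h.c * (z ^ (g.a * h.b) * y ^ h.b * x ^ g.a) * x ^ h.a := by
          rw [(hzy.zpow_zpow _ _).eq]; simp only [zpow_add, mul_assoc]
      _ = z ^ g.c * y ^ g.b * (z ^ h.c * x ^ g.a) * y ^ h.b * x ^ h.a := by
          rw [← zpow_mul_zpow_of_mul_eq hzx hzy hxy]; simp only [mul_assoc]
      _ = z ^ g.c * y ^ g.b * x ^ g.a * (z ^ h.c * y ^ h.b * x ^ h.a) := by
          rw [(hzx.zpow_zpow _ _).eq]; simp only [mul_assoc]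

def x : Heisenberg := ⟨1, 0, 0⟩
def y : Heisenberg := ⟨0, 1, 0⟩
def z : Heisenberg := ⟨0, 0, 1⟩

theorem commute_z (g : Heisenberg) : Commute z g := by
  ext <;> simp [z, add_comm]

theorem x_mul_y : x * y = z * y * x := by
  ext <;> simp [x, y, z]

theorem isConj_y_pow_mul (k : ℕ) : IsConj y (z ^ k * y) :=
  ⟨toUnits (x ^ (k : ℤ)), by simpa using semiconjBy_zpow_of_mul_eq (commute_z x) x_mul_y k⟩

variable {K ι : Type*} [Field K] [IsAlgClosed K] [Fintype ι] [DecidableEq ι]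

theorem exists_pow_eq_one_of_mem_spectrum (ρ : Heisenberg →* GL ι K) {μ : K}
    (hμ : μ ∈ spectrum K (ρ z : Matrix ι ι K)) : ∃ k, 0 < k ∧ μ ^ k = 1 := by
  let φ : Heisenberg →* Module.End K (ι → K) :=
    (Matrix.toLinAlgEquiv' : Matrix ι ι K ≃ₐ[K] _).toMonoidHom.comp ((Units.coeHom _).comp ρ)
  refine Module.End.exists_pow_eq_one_of_hasEigenvalue (a := φ z) (b := φ y)
    ((commute_z y).map φ) ((Group.isUnit y).map φ) (fun k => ?_) ?_
  · simpa using φ.map_isConj (isConj_y_pow_mul k)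
  · rw [Module.End.hasEigenvalue_iff_mem_spectrum]
    exact (AlgEquiv.spectrum_eq (Matrix.toLinAlgEquiv' : Matrix ι ι K ≃ₐ[K] _) _).symm ▸ hμ

theorem isIntegral_trace_z (ρ : Heisenberg →* GL ι K) :
    IsIntegral ℤ (ρ z : Matrix ι ι K).trace := by
  rw [Matrix.trace_eq_sum_roots_charpoly]
  refine IsIntegral.multiset_sum fun μ hμ => ?_
  obtain ⟨k, hk, hμk⟩ := exists_pow_eq_one_of_mem_spectrum ρ
    (Matrix.mem_spectrum_iff_isRoot_charpoly.2 (Polynomial.isRoot_of_mem_roots hμ))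
  exact IsIntegral.of_pow hk (hμk ▸ isIntegral_one)

variable (R : Type*) [CommRing R]

def pauliX : GL (Fin 2) R :=
  ⟨!![0, 1; 1, 0], !![0, 1; 1, 0], by simp [← Matrix.one_fin_two],
    by simp [← Matrix.one_fin_two]⟩

def pauliZ : GL (Fin 2) R :=
  ⟨!![1, 0; 0, -1], !![1, 0; 0, -1], by simp [← Matrix.one_fin_two],
    by simp [← Matrix.one_fin_two]⟩

def pauliRep : Heisenberg →* GL (Fin 2) R :=
  lift_s15 (pauliX R) (pauliZ R) (-1) (Commute.neg_one_left _) (Commute.neg_one_left _)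
    (by ext i j; fin_cases i <;> fin_cases j <;> simp [pauliX, pauliZ])

theorem pauliRep_z : pauliRep R z = -1 := by
  ext : 1
  simp [pauliRep, lift_s15, z]

def pauliSumTrivialRep (m : ℕ) : Heisenberg →* GL (Fin (2 + m)) R :=
  (Units.map (Matrix.fromBlocksOneHom finSumFinEquiv)).comp (pauliRep R)

theorem trace_pauliSumTrivialRep_z (m : ℕ) :
    (pauliSumTrivialRep R m z : Matrix (Fin (2 + m)) (Fin (2 + m)) R).trace = (m : R) - 2 := by
  simp [pauliSumTrivialRep, pauliRep_z, Matrix.trace_fromBlocksOneHom, neg_add_eq_sub]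

end Heisenberg

/-- For every `n ≥ 2`, the representation space `Hom(H₃(ℤ), GL(n,ℂ))` of the integer
Heisenberg group in the general linear group `GL(n,ℂ)` is disconnected. -/
theorem heisenberg_rep_space_disconnected_GL (n : ℕ) (hn : 2 ≤ n) :
    ¬ ConnectedSpace (Heisenberg →* Matrix.GeneralLinearGroup (Fin n) ℂ) := by
  obtain ⟨m, rfl⟩ := Nat.exists_eq_add_of_le hn
  intro _
  let traceZ (ρ : Heisenberg →* GL (Fin (2 + m)) ℂ) : ℂ :=
    (ρ Heisenberg.z : Matrix (Fin (2 + m)) (Fin (2 + m)) ℂ).trace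
  have hcont : Continuous traceZ :=
    (Units.continuous_val.comp (continuous_eval_repSpace Heisenberg.z)).matrix_trace
  have hcount : (Set.range traceZ).Countable :=
    (Algebraic.countable ℤ ℂ).mono <| Set.range_subset_iff.2 fun ρ =>
      (Heisenberg.isIntegral_trace_z ρ).isAlgebraic
  have heq := hcount.isTotallyDisconnected _ subset_rfl (isPreconnected_range hcont)
    (Set.mem_range_self 1) (Set.mem_range_self (Heisenberg.pauliSumTrivialRep ℂ m))
  simp only [traceZ, MonoidHom.one_apply, Units.val_one, Matrix.trace_one, Fintype.card_fin,
    Nat.cast_add, Nat.cast_ofNat, Heisenberg.trace_pauliSumTrivialRep_z] at heq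
  have : (4 : ℂ) = 0 := by linear_combination heq
  norm_num at this
end
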